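/- arXiv:0704.2768 — 5 statements merged into one kernel-verified Lean document; each statement's English description precedes it below -/
import Mathlib

section
/- Let $p: \mathbb{C} \to \mathbb{R}$ be a polynomial (in $z, \bar z$). Define $T(w,z) = -2\,\mathrm{Im}\big(\sum_{j\ge 1} \frac{1}{j!} \frac{\partial^j p(z)}{\partial z^j}(w-z)^j\big)$ and $r(w,\xi,z) = 2\,\mathrm{Im}\big(\sum_{j,k \ge 1} \frac{1}{j!k!}\frac{\partial^{j+k}p(\xi)}{\partial \xi^j \partial \bar\xi^k}(w-\xi)^j\overline{(z-\xi)}^{\,k}\big)$. Then for all $z, w, \xi \in \mathbb{C}$: $T(w,z) = T(w,\xi) + T(\xi,z) - r(w,\xi,z)$. -/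
open Finset

/-- The Wirtinger derivative `∂/∂z` of a function `f : ℂ → ℂ`. -/
noncomputable def WD (f : ℂ → ℂ) : ℂ → ℂ :=
  fun z => (fderiv ℝ f z 1 - Complex.I * fderiv ℝ f z Complex.I) / 2

/-- The Wirtinger derivative `∂/∂z̄` of a function `f : ℂ → ℂ`. -/
noncomputable def WDbar (f : ℂ → ℂ) : ℂ → ℂ :=
  fun z => (fderiv ℝ f z 1 + Complex.I * fderiv ℝ f z Complex.I) / 2

/-- The normalized mixed Taylor coefficient
`A_{jk}(z) = (1/(j! k!)) ∂^{j+k} p(z) / ∂z^j ∂z̄^k`. -/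
noncomputable def Acoef (p : ℂ → ℂ) (j k : ℕ) (z : ℂ) : ℂ :=
  (1 / ((Nat.factorial j : ℂ) * (Nat.factorial k : ℂ))) * (WD^[j] (WDbar^[k] p)) z

/-- `p` is a polynomial in `z` and `z̄` of degree at most `D` in each variable. -/
def IsCCPoly (p : ℂ → ℂ) (D : ℕ) : Prop :=
  ∃ a : ℕ → ℕ → ℂ, ∀ z : ℂ,
    p z = ∑ j ∈ range (D + 1), ∑ k ∈ range (D + 1), a j k * z ^ j * (starRingEnd ℂ z) ^ k

/-- `p` takes real values. -/
def IsRealValued (p : ℂ → ℂ) : Prop := ∀ z, (p z).im = 0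

/-- The twist term `T(w,z) = -2 Im ∑_{j≥1} (1/j!) ∂^j p(z)/∂z^j (w-z)^j`. -/
noncomputable def Ttwist (p : ℂ → ℂ) (D : ℕ) (w z : ℂ) : ℝ :=
  -2 * (∑ j ∈ Finset.Icc 1 D, Acoef p j 0 z * (w - z) ^ j).im

/-- `r(w,ξ,z) = 2 Im ∑_{j,k≥1} A_{jk}(ξ) (w-ξ)^j conj(z-ξ)^k`. -/
noncomputable def rtwist (p : ℂ → ℂ) (D : ℕ) (w ξ z : ℂ) : ℝ :=
  2 * (∑ j ∈ Finset.Icc 1 D, ∑ k ∈ Finset.Icc 1 D,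
    Acoef p j k ξ * (w - ξ) ^ j * (starRingEnd ℂ (z - ξ)) ^ k).im

/-- `e(w,ξ) = ∑_{j≥1} (1/j!) ∂^{j+1} p(ξ)/∂ξ^j ∂ξ̄ (w-ξ)^j`. -/
noncomputable def efun (p : ℂ → ℂ) (D : ℕ) (w ξ : ℂ) : ℂ :=
  ∑ j ∈ Finset.Icc 1 D, Acoef p j 1 ξ * (w - ξ) ^ j

/-- `Λ(z,δ) = ∑_{j,k ≥ 1} |A_{jk}(z)| δ^{j+k}`. -/
noncomputable def Lam (p : ℂ → ℂ) (D : ℕ) (z : ℂ) (δ : ℝ) : ℝ :=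
  ∑ j ∈ Finset.Icc 1 D, ∑ k ∈ Finset.Icc 1 D, ‖Acoef p j k z‖ * δ ^ (j + k)

/-- The weighted operator `Z_{τp} = ∂/∂z - τ (∂p/∂z)`. -/
noncomputable def Zop (p : ℂ → ℂ) (τ : ℝ) (f : ℂ → ℂ) : ℂ → ℂ :=
  fun z => WD f z - (τ : ℂ) * WD p z * f z

/-- The weighted operator `Z̄_{τp} = ∂/∂z̄ + τ (∂p/∂z̄)`. -/
noncomputable def Zbarop (p : ℂ → ℂ) (τ : ℝ) (f : ℂ → ℂ) : ℂ → ℂ :=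
  fun z => WDbar f z + (τ : ℂ) * WDbar p z * f z

/-- The weighted Laplacian `□_{τp} = -Z̄_{τp} Z_{τp}`. -/
noncomputable def BoxOp (p : ℂ → ℂ) (τ : ℝ) (f : ℂ → ℂ) : ℂ → ℂ :=
  fun z => -(Zbarop p τ (Zop p τ f) z)

/-- The twisted `τ`-derivative `M_{τp} = ∂/∂τ - i T(w,z)`, acting on functions of `(τ,z)`. -/
noncomputable def Mop (p : ℂ → ℂ) (D : ℕ) (w : ℂ) (F : ℝ → ℂ → ℂ) : ℝ → ℂ → ℂ :=
  fun τ z => deriv (fun σ => F σ z) τ - Complex.I * (Ttwist p D w z : ℂ) * F τ z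

/-!
Write `p z = P(z, z̄)` with `P u v = ∑ cᵢ u^{eᵢ} v^{fᵢ}` a polynomial in two independent variables.
Then `A_{jk}(x)` are the Taylor coefficients of `P` at `(x, x̄)`, so the binomial theorem gives
`∑_{j≥1} A_{j0}(x) (u - x)^j = P(u, x̄) - P(x, x̄)` and identifies the double sum in `r(w,ξ,z)`
with the mixed difference `P(w, z̄) - P(w, ξ̄) - P(ξ, z̄) + P(ξ, ξ̄)`. The cocycle identity then
holds already for the complex sums, by telescoping.
-/

open ComplexConjugate

section Wirtinger

variable {f : ℂ → ℂ} {z α β : ℂ}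

theorem WD_eq_of_fderiv_apply (h : ∀ v, fderiv ℝ f z v = α * v + β * conj v) : WD f z = α := by
  simp only [WD, h, map_one, Complex.conj_I]
  linear_combination (β - α) / 2 * Complex.I_sq

theorem WDbar_eq_of_fderiv_apply (h : ∀ v, fderiv ℝ f z v = α * v + β * conj v) :
    WDbar f z = β := by
  simp only [WDbar, h, map_one, Complex.conj_I]
  linear_combination (α - β) / 2 * Complex.I_sq

end Wirtinger

theorem exists_hasFDerivAt_pow_mul_conj_pow (a b : ℕ) (z : ℂ) :
    ∃ L : ℂ →L[ℝ] ℂ, HasFDerivAt (fun w : ℂ => w ^ a * conj w ^ b) L z ∧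
      ∀ v, L v = a * z ^ (a - 1) * conj z ^ b * v + b * z ^ a * conj z ^ (b - 1) * conj v := by
  have hpow (n : ℕ) (x : ℂ) := (hasDerivAt_pow n x).hasFDerivAt.restrictScalars ℝ
  refine ⟨_, (hpow a z).mul ((hpow b (conj z)).comp z Complex.conjCLE.hasFDerivAt), fun v => ?_⟩
  simp only [add_apply, smul_apply, ContinuousLinearMap.comp_apply,
    ContinuousLinearEquiv.coe_coe, ContinuousAlgEquiv.coeCLE_apply, Complex.conjCAE_apply,
    ContinuousLinearMap.coe_restrictScalars', ContinuousLinearMap.toSpanSingleton_apply, smul_eq_mul]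
  ring

section MonomialSum

variable {ι : Type*} (s : Finset ι) (c : ι → ℂ) (e f : ι → ℕ)

def monomialSum (u v : ℂ) : ℂ := ∑ i ∈ s, c i * (u ^ e i * v ^ f i)

theorem fderiv_monomialSum_apply (z v : ℂ) :
    fderiv ℝ (fun w => monomialSum s c e f w (conj w)) z v =
      monomialSum s (fun i => e i * c i) (fun i => e i - 1) f z (conj z) * v
        + monomialSum s (fun i => f i * c i) e (fun i => f i - 1) z (conj z) * conj v := by
  choose L hL hLv using fun i => exists_hasFDerivAt_pow_mul_conj_pow (e i) (f i) z
  unfold monomialSum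
  rw [(HasFDerivAt.fun_sum fun i _ => (hL i).const_mul (c i)).fderiv]
  simp only [FunLike.coe_sum, Finset.sum_apply, FunLike.coe_smul, Pi.smul_apply, hLv,
    smul_eq_mul, sum_mul, ← sum_add_distrib]
  exact sum_congr rfl fun i _ => by ring

theorem WD_monomialSum :
    WD (fun w => monomialSum s c e f w (conj w)) =
      fun w => monomialSum s (fun i => e i * c i) (fun i => e i - 1) f w (conj w) :=
  funext fun z => WD_eq_of_fderiv_apply (fderiv_monomialSum_apply s c e f z)

theorem WDbar_monomialSum :
    WDbar (fun w => monomialSum s c e f w (conj w)) =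
      fun w => monomialSum s (fun i => f i * c i) e (fun i => f i - 1) w (conj w) :=
  funext fun z => WDbar_eq_of_fderiv_apply (fderiv_monomialSum_apply s c e f z)

theorem WD_iterate_monomialSum (j : ℕ) :
    WD^[j] (fun w => monomialSum s c e f w (conj w)) =
      fun w => monomialSum s (fun i => (e i).descFactorial j * c i) (fun i => e i - j) f w
        (conj w) := by
  induction j with
  | zero => simp
  | succ j ih =>
    rw [Function.iterate_succ_apply', ih, WD_monomialSum]
    funext w
    refine sum_congr rfl fun i _ => ?_
    simp only [Nat.descFactorial_succ, Nat.sub_sub]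
    push_cast
    ring

theorem WDbar_iterate_monomialSum (k : ℕ) :
    WDbar^[k] (fun w => monomialSum s c e f w (conj w)) =
      fun w => monomialSum s (fun i => (f i).descFactorial k * c i) e (fun i => f i - k) w
        (conj w) := by
  induction k with
  | zero => simp
  | succ k ih =>
    rw [Function.iterate_succ_apply', ih, WDbar_monomialSum]
    funext w
    refine sum_congr rfl fun i _ => ?_
    simp only [Nat.descFactorial_succ, Nat.sub_sub]
    push_cast
    ring

theorem Acoef_monomialSum (j k : ℕ) (x : ℂ) :
    Acoef (fun w => monomialSum s c e f w (conj w)) j k x =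
      monomialSum s (fun i => (e i).choose j * (f i).choose k * c i)
        (fun i => e i - j) (fun i => f i - k) x (conj x) := by
  rw [Acoef, WDbar_iterate_monomialSum, WD_iterate_monomialSum]
  simp only [monomialSum, mul_sum, Nat.descFactorial_eq_factorial_mul_choose]
  refine sum_congr rfl fun i _ => ?_
  have := Nat.factorial_ne_zero j
  have := Nat.factorial_ne_zero k
  push_cast
  field_simp

end MonomialSum

theorem sum_Icc_choose_mul_pow_sub {R : Type*} [CommRing R] {a D : ℕ} (ha : a ≤ D) (u v : R) :
    ∑ j ∈ Icc 1 D, a.choose j * (v ^ (a - j) * (u - v) ^ j) = u ^ a - v ^ a := by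
  have h := add_pow (u - v) v a
  rw [sub_add_cancel, sum_subset (range_subset_range.2 (Nat.succ_le_succ ha)) fun j _ hj => by
    rw [Nat.choose_eq_zero_of_lt (by simpa using hj), Nat.cast_zero, mul_zero],
    range_eq_Ico, sum_eq_sum_Ico_succ_bot (Nat.succ_pos D), Nat.succ_eq_add_one,
    Ico_add_one_right_eq_Icc] at h
  simp only [h, pow_zero, Nat.choose_zero_right, Nat.cast_one, mul_one, one_mul, Nat.sub_zero,
    zero_add, add_sub_cancel_left]
  exact sum_congr rfl fun j _ => by ring

section Taylor

variable {ι : Type*} {s : Finset ι} {c : ι → ℂ} {e f : ι → ℕ} {D : ℕ}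

theorem sum_Acoef_zero_mul_pow_monomialSum (he : ∀ i ∈ s, e i ≤ D) (x u : ℂ) :
    ∑ j ∈ Icc 1 D, Acoef (fun w => monomialSum s c e f w (conj w)) j 0 x * (u - x) ^ j =
      monomialSum s c e f u (conj x) - monomialSum s c e f x (conj x) := by
  simp only [Acoef_monomialSum]
  simp only [monomialSum, sum_mul, ← sum_sub_distrib]
  rw [sum_comm]
  refine sum_congr rfl fun i hi => ?_
  rw [show c i * (u ^ e i * conj x ^ f i) - c i * (x ^ e i * conj x ^ f i) =
      c i * conj x ^ f i * (u ^ e i - x ^ e i) by ring, ← sum_Icc_choose_mul_pow_sub (he i hi),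
    mul_sum]
  exact sum_congr rfl fun j _ => by simp only [Nat.choose_zero_right, Nat.sub_zero]; push_cast; ring

theorem sum_Acoef_mul_pow_mul_pow_monomialSum (he : ∀ i ∈ s, e i ≤ D) (hf : ∀ i ∈ s, f i ≤ D)
    (w ξ z : ℂ) :
    ∑ j ∈ Icc 1 D, ∑ k ∈ Icc 1 D, Acoef (fun w => monomialSum s c e f w (conj w)) j k ξ
        * (w - ξ) ^ j * conj (z - ξ) ^ k =
      monomialSum s c e f w (conj z) - monomialSum s c e f w (conj ξ)
        - monomialSum s c e f ξ (conj z) + monomialSum s c e f ξ (conj ξ) := by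
  simp only [Acoef_monomialSum]
  simp only [monomialSum, sum_mul, ← sum_sub_distrib, ← sum_add_distrib]
  rw [sum_congr rfl fun j _ => sum_comm, sum_comm]
  refine sum_congr rfl fun i hi => ?_
  rw [show c i * (w ^ e i * conj z ^ f i) - c i * (w ^ e i * conj ξ ^ f i)
        - c i * (ξ ^ e i * conj z ^ f i) + c i * (ξ ^ e i * conj ξ ^ f i) =
      c i * ((w ^ e i - ξ ^ e i) * (conj z ^ f i - conj ξ ^ f i)) by ring,
    ← sum_Icc_choose_mul_pow_sub (he i hi), ← sum_Icc_choose_mul_pow_sub (hf i hi), sum_mul_sum,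
    mul_sum]
  refine sum_congr rfl fun j _ => ?_
  rw [mul_sum]
  exact sum_congr rfl fun k _ => by rw [map_sub]; ring

end Taylor

theorem IsCCPoly.eq_monomialSum {p : ℂ → ℂ} {D : ℕ} (hp : IsCCPoly p D) :
    ∃ (s : Finset (ℕ × ℕ)) (c : ℕ × ℕ → ℂ), (∀ i ∈ s, i.1 ≤ D ∧ i.2 ≤ D) ∧
      p = fun z => monomialSum s c Prod.fst Prod.snd z (conj z) := by
  obtain ⟨a, ha⟩ := hp
  refine ⟨range (D + 1) ×ˢ range (D + 1), fun i => a i.1 i.2, fun i hi => ?_, funext fun z => ?_⟩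
  · simpa [Nat.lt_succ_iff] using hi
  · rw [ha z, monomialSum, sum_product]
    exact sum_congr rfl fun j _ => sum_congr rfl fun k _ => mul_assoc _ _ _

theorem Ttwist_cocycle_general (p : ℂ → ℂ) (D : ℕ) (hpoly : IsCCPoly p D)
    (z w ξ : ℂ) :
    Ttwist p D w z = Ttwist p D w ξ + Ttwist p D ξ z - rtwist p D w ξ z := by
  obtain ⟨s, c, hdeg, rfl⟩ := hpoly.eq_monomialSum
  have he : ∀ i ∈ s, i.1 ≤ D := fun i hi => (hdeg i hi).1
  have hf : ∀ i ∈ s, i.2 ≤ D := fun i hi => (hdeg i hi).2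
  simp only [Ttwist, rtwist, sum_Acoef_zero_mul_pow_monomialSum he,
    sum_Acoef_mul_pow_mul_pow_monomialSum he hf, Complex.sub_im, Complex.add_im]
  ring

/-- `T(w,z) = T(w,ξ) + T(ξ,z) - r(w,ξ,z)` for a real-valued polynomial `p` on `ℂ`. -/
theorem Ttwist_cocycle (p : ℂ → ℂ) (D : ℕ) (hpoly : IsCCPoly p D) (hreal : IsRealValued p)
    (z w ξ : ℂ) :
    Ttwist p D w z = Ttwist p D w ξ + Ttwist p D ξ z - rtwist p D w ξ z :=
  Ttwist_cocycle_general p D hpoly z w ξ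
end

section
/- Let $p$ be a real-valued polynomial on $\mathbb{C}$, $A_{jk}(z) = \frac{1}{j!k!}\frac{\partial^{j+k}p(z)}{\partial z^j \partial \bar z^k}$, and define $\Lambda(z,\delta) = \sum_{j,k \ge 1} |A_{jk}(z)| \, \delta^{j+k}$ for $\delta > 0$. Then there exist constants $c, C > 0$ depending only on $\deg p$ such that for all $z, w \in \mathbb{C}$, $c\,\Lambda(w, |z-w|) \le \Lambda(z, |z-w|) \le C\, \Lambda(w, |z-w|)$. -/
/-!
Expanding `p` around `w` gives the re-expansion identity
`A_{jk}(z) = ∑_{m,n} C(m,j) C(n,k) A_{mn}(w) (z-w)^{m-j} (z̄-w̄)^{n-k}`.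
With `δ = |z - w|` the triangle inequality turns it into
`|A_{jk}(z)| δ^{j+k} ≤ ∑_{m,n} C(m,j) C(n,k) |A_{mn}(w)| δ^{m+n}`; for `j, k ≥ 1` only `m, n ≥ 1`
contribute, and the binomials are at most `2^D`, so each term of `Λ(z,δ)` is at most `4^D Λ(w,δ)`.
Hence `Λ(z,δ) ≤ D² 4^D Λ(w,δ)`, and exchanging `z` and `w` gives the lower bound.
-/

open Finset

open ComplexConjugate

theorem WD_eq_of_hasFDerivAt {f : ℂ → ℂ} {z A B : ℂ}
    (h : HasFDerivAt f (A • ContinuousLinearMap.id ℝ ℂ + B • Complex.conjCLE.toContinuousLinearMap) z) :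
    WD f z = A := by
  simp only [WD, h.fderiv, add_apply, smul_apply, ContinuousLinearMap.id_apply, smul_eq_mul,
    ContinuousLinearEquiv.coe_coe, ContinuousAlgEquiv.coeCLE_apply, Complex.conjCAE_apply, map_one,
    Complex.conj_I]
  linear_combination (B - A) / 2 * Complex.I_sq

theorem WDbar_eq_of_hasFDerivAt {f : ℂ → ℂ} {z A B : ℂ}
    (h : HasFDerivAt f (A • ContinuousLinearMap.id ℝ ℂ + B • Complex.conjCLE.toContinuousLinearMap) z) :
    WDbar f z = B := by
  simp only [WDbar, h.fderiv, add_apply, smul_apply, ContinuousLinearMap.id_apply, smul_eq_mul,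
    ContinuousLinearEquiv.coe_coe, ContinuousAlgEquiv.coeCLE_apply, Complex.conjCAE_apply, map_one,
    Complex.conj_I]
  linear_combination (A - B) / 2 * Complex.I_sq

theorem hasFDerivAt_sub_pow_mul_conj_sub_pow (w : ℂ) (m n : ℕ) (z : ℂ) :
    HasFDerivAt (fun z => (z - w) ^ m * conj (z - w) ^ n)
      ((m * (z - w) ^ (m - 1) * conj (z - w) ^ n) • ContinuousLinearMap.id ℝ ℂ
        + (n * (z - w) ^ m * conj (z - w) ^ (n - 1)) • Complex.conjCLE.toContinuousLinearMap) z := by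
  have hsub : HasFDerivAt (fun z : ℂ => z - w) (ContinuousLinearMap.id ℝ ℂ) z :=
    (hasFDerivAt_id z).sub_const w
  have hconj : HasFDerivAt (fun z : ℂ => conj (z - w)) Complex.conjCLE.toContinuousLinearMap z :=
    Complex.conjCLE.toContinuousLinearMap.hasFDerivAt.comp z hsub
  refine ((hsub.pow m).mul (hconj.pow n)).congr_fderiv ?_
  ext v
  simp only [add_apply, smul_apply, ContinuousLinearMap.id_apply, ContinuousLinearEquiv.coe_coe,
    ContinuousAlgEquiv.coeCLE_apply, Complex.conjCAE_apply, smul_eq_mul, nsmul_eq_mul]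
  ring

noncomputable def ccPoly {ι : Type*} (w : ℂ) (s : Finset ι) (c : ι → ℂ) (a b : ι → ℕ) : ℂ → ℂ :=
  fun z => ∑ i ∈ s, c i * (z - w) ^ a i * conj (z - w) ^ b i

section ccPoly

variable {ι : Type*} (w : ℂ) (s : Finset ι) (c : ι → ℂ) (a b : ι → ℕ)

theorem hasFDerivAt_ccPoly (z : ℂ) :
    HasFDerivAt (ccPoly w s c a b)
      ((ccPoly w s (fun i => c i * a i) (fun i => a i - 1) b z) • ContinuousLinearMap.id ℝ ℂ
        + (ccPoly w s (fun i => c i * b i) a (fun i => b i - 1) z) •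
          Complex.conjCLE.toContinuousLinearMap) z := by
  have h := HasFDerivAt.fun_sum (u := s) fun i _ =>
    (hasFDerivAt_sub_pow_mul_conj_sub_pow w (a i) (b i) z).const_mul (c i)
  refine (h.congr_fderiv ?_).congr_of_eventuallyEq ?_
  · ext v
    simp only [_root_.sum_apply, add_apply, smul_apply,
      ContinuousLinearMap.id_apply, ContinuousLinearEquiv.coe_coe, ContinuousAlgEquiv.coeCLE_apply,
      Complex.conjCAE_apply, smul_add, smul_eq_mul, map_sub, ccPoly, sum_mul, ← sum_add_distrib]
    exact sum_congr rfl fun i _ => by ring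
  · exact .of_forall fun y => by simp only [ccPoly, mul_assoc]

theorem WD_ccPoly :
    WD (ccPoly w s c a b) = ccPoly w s (fun i => c i * a i) (fun i => a i - 1) b :=
  funext fun z => WD_eq_of_hasFDerivAt (hasFDerivAt_ccPoly w s c a b z)

theorem WDbar_ccPoly :
    WDbar (ccPoly w s c a b) = ccPoly w s (fun i => c i * b i) a (fun i => b i - 1) :=
  funext fun z => WDbar_eq_of_hasFDerivAt (hasFDerivAt_ccPoly w s c a b z)

theorem WD_iterate_ccPoly (j : ℕ) :
    WD^[j] (ccPoly w s c a b)
      = ccPoly w s (fun i => c i * (a i).descFactorial j) (fun i => a i - j) b := by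
  induction j with
  | zero => simp
  | succ j ih =>
    rw [Function.iterate_succ_apply', ih, WD_ccPoly]
    congr 1
    funext i
    rw [Nat.descFactorial_succ]
    push_cast
    ring

theorem WDbar_iterate_ccPoly (k : ℕ) :
    WDbar^[k] (ccPoly w s c a b)
      = ccPoly w s (fun i => c i * (b i).descFactorial k) a (fun i => b i - k) := by
  induction k with
  | zero => simp
  | succ k ih =>
    rw [Function.iterate_succ_apply', ih, WDbar_ccPoly]
    congr 1
    funext i
    rw [Nat.descFactorial_succ]
    push_cast
    ring

theorem Acoef_ccPoly (j k : ℕ) (z : ℂ) :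
    Acoef (ccPoly w s c a b) j k z
      = ccPoly w s (fun i => c i * (a i).choose j * (b i).choose k)
          (fun i => a i - j) (fun i => b i - k) z := by
  rw [Acoef, WDbar_iterate_ccPoly, WD_iterate_ccPoly, ccPoly, ccPoly, mul_sum]
  refine sum_congr rfl fun i _ => ?_
  have hj : (j.factorial : ℂ) ≠ 0 := by exact_mod_cast j.factorial_ne_zero
  have hk : (k.factorial : ℂ) ≠ 0 := by exact_mod_cast k.factorial_ne_zero
  simp only [Nat.descFactorial_eq_factorial_mul_choose, Nat.cast_mul]
  field_simp

end ccPoly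

theorem choose_mul_pow_sub_mul_pow {R : Type*} [Semiring R] (x : R) (m j : ℕ) :
    (m.choose j : R) * x ^ (m - j) * x ^ j = m.choose j * x ^ m := by
  rcases le_or_gt j m with h | h
  · rw [mul_assoc, pow_sub_mul_pow x h]
  · simp [Nat.choose_eq_zero_of_lt h]

theorem add_pow_eq_sum_range_of_le {R : Type*} [CommSemiring R] (x y : R) {n N : ℕ} (h : n ≤ N) :
    (x + y) ^ n = ∑ m ∈ range (N + 1), x ^ m * y ^ (n - m) * n.choose m := by
  rw [add_pow]
  refine sum_subset (range_subset_range.mpr (by omega)) fun m _ hm => ?_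
  rw [Nat.choose_eq_zero_of_lt (by simpa using hm), Nat.cast_zero, mul_zero]

section IsCCPoly

variable {p : ℂ → ℂ} {D : ℕ}

theorem IsCCPoly.eq_ccPoly (hp : IsCCPoly p D) (w : ℂ) :
    p = ccPoly w (range (D + 1) ×ˢ range (D + 1)) (fun r => Acoef p r.1 r.2 w) Prod.fst Prod.snd := by
  obtain ⟨a, ha⟩ := hp
  set R := range (D + 1) ×ˢ range (D + 1)
  have hp0 : p = ccPoly 0 R (fun q => a q.1 q.2) Prod.fst Prod.snd :=
    funext fun z => by simp only [ha, ccPoly, sub_zero, R, sum_product]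
  have hA : ∀ r : ℕ × ℕ, Acoef p r.1 r.2 w = ∑ q ∈ R,
      a q.1 q.2 * q.1.choose r.1 * q.2.choose r.2 * w ^ (q.1 - r.1) * conj w ^ (q.2 - r.2) := by
    intro r
    rw [hp0, Acoef_ccPoly]
    simp only [ccPoly, sub_zero]
  funext z
  have hz : z = (z - w) + w := by ring
  calc p z = ∑ q ∈ R, a q.1 q.2 * ((z - w) + w) ^ q.1 * (conj (z - w) + conj w) ^ q.2 := by
        rw [← map_add, ← hz, hp0]
        simp only [ccPoly, sub_zero]
    _ = ∑ q ∈ R, ∑ r ∈ R, a q.1 q.2 * ((z - w) ^ r.1 * w ^ (q.1 - r.1) * q.1.choose r.1)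
          * (conj (z - w) ^ r.2 * conj w ^ (q.2 - r.2) * q.2.choose r.2) := by
        refine sum_congr rfl fun q hq => ?_
        obtain ⟨hq1, hq2⟩ := mem_product.mp hq
        rw [add_pow_eq_sum_range_of_le _ _ (Nat.lt_succ_iff.mp (mem_range.mp hq1)),
          add_pow_eq_sum_range_of_le _ _ (Nat.lt_succ_iff.mp (mem_range.mp hq2)),
          mul_assoc, sum_mul_sum, sum_product]
        simp only [mul_sum, mul_assoc]
    _ = ∑ r ∈ R, Acoef p r.1 r.2 w * (z - w) ^ r.1 * conj (z - w) ^ r.2 := by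
        rw [sum_comm]
        refine sum_congr rfl fun r _ => ?_
        rw [hA, sum_mul, sum_mul]
        exact sum_congr rfl fun q _ => by ring

theorem IsCCPoly.Acoef_eq_sum (hp : IsCCPoly p D) (j k : ℕ) (z w : ℂ) :
    Acoef p j k z = ∑ r ∈ range (D + 1) ×ˢ range (D + 1),
      Acoef p r.1 r.2 w * r.1.choose j * r.2.choose k * (z - w) ^ (r.1 - j)
        * conj (z - w) ^ (r.2 - k) := by
  conv_lhs => rw [hp.eq_ccPoly w, Acoef_ccPoly]
  rfl

theorem IsCCPoly.norm_Acoef_mul_pow_le (hp : IsCCPoly p D) {j k : ℕ} (hj : 1 ≤ j) (hk : 1 ≤ k)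
    (z w : ℂ) : ‖Acoef p j k z‖ * ‖z - w‖ ^ (j + k) ≤ 4 ^ D * Lam p D w ‖z - w‖ := by
  set δ := ‖z - w‖
  set R := range (D + 1) ×ˢ range (D + 1)
  calc ‖Acoef p j k z‖ * δ ^ (j + k)
      ≤ ∑ r ∈ R, (r.1.choose j * r.2.choose k : ℝ) * (‖Acoef p r.1 r.2 w‖ * δ ^ (r.1 + r.2)) := by
        rw [hp.Acoef_eq_sum j k z w]
        refine (mul_le_mul_of_nonneg_right (norm_sum_le _ _) (by positivity)).trans_eq ?_
        rw [sum_mul]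
        refine sum_congr rfl fun r _ => ?_
        simp only [norm_mul, norm_pow, Complex.norm_natCast, Complex.norm_conj, pow_add]
        linear_combination
          (‖Acoef p r.1 r.2 w‖ * r.2.choose k * δ ^ (r.2 - k) * δ ^ k) *
              choose_mul_pow_sub_mul_pow δ r.1 j
            + (‖Acoef p r.1 r.2 w‖ * r.1.choose j * δ ^ r.1) * choose_mul_pow_sub_mul_pow δ r.2 k
    _ = ∑ r ∈ Icc 1 D ×ˢ Icc 1 D,
          (r.1.choose j * r.2.choose k : ℝ) * (‖Acoef p r.1 r.2 w‖ * δ ^ (r.1 + r.2)) := by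
        refine (sum_subset (fun r hr => ?_) fun r hr hr' => ?_).symm
        · simp only [R, mem_product, mem_Icc, mem_range] at hr ⊢
          omega
        · simp only [R, mem_product, mem_Icc, mem_range] at hr hr'
          obtain h | h : r.1 < j ∨ r.2 < k := by omega
          all_goals simp [Nat.choose_eq_zero_of_lt h]
    _ ≤ ∑ r ∈ Icc 1 D ×ˢ Icc 1 D, 4 ^ D * (‖Acoef p r.1 r.2 w‖ * δ ^ (r.1 + r.2)) := by
        refine sum_le_sum fun r hr => mul_le_mul_of_nonneg_right ?_ (by positivity)
        obtain ⟨⟨-, h1⟩, ⟨-, h2⟩⟩ := mem_product.mp hr |>.imp mem_Icc.mp mem_Icc.mp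
        have hchoose : r.1.choose j * r.2.choose k ≤ 4 ^ D := calc
          _ ≤ 2 ^ D * 2 ^ D := Nat.mul_le_mul
            ((Nat.choose_le_two_pow _ _).trans (Nat.pow_le_pow_right two_pos h1))
            ((Nat.choose_le_two_pow _ _).trans (Nat.pow_le_pow_right two_pos h2))
          _ = 4 ^ D := by rw [← mul_pow]; rfl
        exact_mod_cast hchoose
    _ = 4 ^ D * Lam p D w δ := by rw [← mul_sum, Lam, sum_product]

theorem IsCCPoly.Lam_le (hp : IsCCPoly p D) (z w : ℂ) :
    Lam p D z ‖z - w‖ ≤ D ^ 2 * 4 ^ D * Lam p D w ‖z - w‖ := calc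
  Lam p D z ‖z - w‖ ≤ ∑ j ∈ Icc 1 D, ∑ k ∈ Icc 1 D, 4 ^ D * Lam p D w ‖z - w‖ :=
    sum_le_sum fun j hj => sum_le_sum fun k hk =>
      hp.norm_Acoef_mul_pow_le (mem_Icc.mp hj).1 (mem_Icc.mp hk).1 z w
  _ = D ^ 2 * 4 ^ D * Lam p D w ‖z - w‖ := by
    simp only [sum_const, Nat.card_Icc, add_tsub_cancel_right, nsmul_eq_mul]
    ring

end IsCCPoly

theorem Lam_nonneg (p : ℂ → ℂ) (D : ℕ) (z : ℂ) {δ : ℝ} (hδ : 0 ≤ δ) : 0 ≤ Lam p D z δ := by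
  unfold Lam
  positivity

/-- For a real-valued polynomial `p` of degree at most `D`, the quantities
`Λ(z,|z-w|)` and `Λ(w,|z-w|)` are comparable, with constants depending only on `D`. -/
theorem Lam_comparable (D : ℕ) :
    ∃ c C : ℝ, 0 < c ∧ 0 < C ∧
      ∀ p : ℂ → ℂ, IsCCPoly p D → IsRealValued p → ∀ z w : ℂ,
        c * Lam p D w (‖z - w‖) ≤ Lam p D z (‖z - w‖) ∧
        Lam p D z (‖z - w‖) ≤ C * Lam p D w (‖z - w‖) := by
  set K : ℝ := D ^ 2 * 4 ^ D + 1
  have hK : 0 < K := by positivity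
  refine ⟨K⁻¹, K, inv_pos.mpr hK, hK, fun p hp _ z w => ⟨?_, ?_⟩⟩
  · have h := hp.Lam_le w z
    rw [norm_sub_rev] at h
    rw [inv_mul_le_iff₀ hK]
    exact h.trans (mul_le_mul_of_nonneg_right (lt_add_one _).le (Lam_nonneg p D z (norm_nonneg _)))
  · exact (hp.Lam_le z w).trans
      (mul_le_mul_of_nonneg_right (lt_add_one _).le (Lam_nonneg p D w (norm_nonneg _)))
end

section
/- Let $\Delta = (a_1, b_1) \times (a_2, b_2) \subset \mathbb{R}^2$ be a square of sidelength $\delta > 0$, and let $f \in C^2(\overline{\Delta})$. Then for every $(x_1, x_2) \in \Delta$: $|f(x_1,x_2)|^2 \le 4\big(\frac{1}{\delta^2}\int_\Delta |f|^2 + \int_\Delta |\nabla f|^2 + \delta^2 \int_\Delta |\partial_2 \partial_1 f|^2\big)$. -/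
/-!
For `u ∈ C¹[a, b]` with `ℓ = b - a`, writing `u x = u y + ∫_y^x u'` and applying Cauchy–Schwarz
gives `u x ^ 2 ≤ 2 u y ^ 2 + 2 ℓ ∫ u' ^ 2`; averaging over `y` yields the one-dimensional
estimate `u x ^ 2 ≤ 2 (ℓ⁻¹ ∫ u ^ 2 + ℓ ∫ u' ^ 2)`. On a rectangle, apply it in the first variable
to `f (·, x₂)`, then in the second variable to `f (t, ·)` and `∂₁ f (t, ·)`, and integrate over
`t`: this tensorization produces the constant `2 · 2 = 4` and the mixed term `∂₂ ∂₁ f`.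
-/

open MeasureTheory Set Filter Topology

theorem sq_integral_le_measureReal_univ_mul_integral_sq {α : Type*} [MeasurableSpace α]
    {μ : Measure α} [IsFiniteMeasure μ] {u : α → ℝ}
    (hu : Integrable u μ) (hu2 : Integrable (fun x => u x ^ 2) μ) :
    (∫ x, u x ∂μ) ^ 2 ≤ μ.real univ * ∫ x, u x ^ 2 ∂μ := by
  set m := μ.real univ
  set I := ∫ x, u x ∂μ
  set J := ∫ x, u x ^ 2 ∂μ
  have hexpand : ∫ x, (m * u x - I) ^ 2 ∂μ = m * (m * J - I ^ 2) := by
    have e : (fun x => (m * u x - I) ^ 2) =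
        fun x => m ^ 2 * u x ^ 2 - 2 * m * I * u x + I ^ 2 := by
      funext x; ring
    rw [e, integral_add ?_ (integrable_const _), integral_sub (hu2.const_mul _) (hu.const_mul _),
      integral_const_mul, integral_const_mul, integral_const, smul_eq_mul]
    · ring
    · exact (hu2.const_mul _).sub (hu.const_mul _)
  have hnonneg : 0 ≤ m * (m * J - I ^ 2) := hexpand ▸ integral_nonneg fun x => sq_nonneg _
  rcases measureReal_nonneg.eq_or_lt with hm | hm
  · have : μ = 0 := Measure.measure_univ_eq_zero.1 ((measureReal_eq_zero_iff).1 hm.symm)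
    simp [I, m, this]
  · nlinarith

theorem sq_intervalIntegral_le_sub_mul_integral_sq {u : ℝ → ℝ} {a b y x : ℝ}
    (hu : ContinuousOn u (Icc a b)) (hy : y ∈ Icc a b) (hx : x ∈ Icc a b) :
    (∫ t in y..x, u t) ^ 2 ≤ (b - a) * ∫ t in Ioo a b, u t ^ 2 := by
  have hsub : uIoc y x ⊆ Ioc a b := fun t ht =>
    ⟨(le_min hy.1 hx.1).trans_lt ht.1, ht.2.trans (max_le hy.2 hx.2)⟩
  have hu2 : IntegrableOn (fun t => u t ^ 2) (Ioc a b) :=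
    ((hu.pow 2).integrableOn_Icc).mono_set Ioc_subset_Icc_self
  have : IsFiniteMeasure (volume.restrict (uIoc y x)) := by rw [uIoc]; infer_instance
  calc (∫ t in y..x, u t) ^ 2 = (∫ t in uIoc y x, u t) ^ 2 := by
        rw [← sq_abs, intervalIntegral.abs_integral_eq_abs_integral_uIoc, sq_abs]
    _ ≤ volume.real (uIoc y x) * ∫ t in uIoc y x, u t ^ 2 := by
        simpa using sq_integral_le_measureReal_univ_mul_integral_sq
          ((hu.integrableOn_Icc.mono_set Ioc_subset_Icc_self).mono_set hsub) (hu2.mono_set hsub)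
    _ ≤ (b - a) * ∫ t in Ioc a b, u t ^ 2 := by
        refine mul_le_mul ?_ ?_ (integral_nonneg fun t => sq_nonneg _) (by linarith [hx.1, hx.2])
        · simp only [measureReal_def, Real.volume_uIoc, ENNReal.toReal_ofReal (abs_nonneg _)]
          exact abs_sub_le_iff.2 ⟨by linarith [hx.2, hy.1], by linarith [hx.1, hy.2]⟩
        · exact setIntegral_mono_set hu2 (ae_of_all _ fun t => sq_nonneg _) hsub.eventuallyLE
    _ = (b - a) * ∫ t in Ioo a b, u t ^ 2 := by rw [integral_Ioc_eq_integral_Ioo]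

theorem sq_le_of_hasDerivAt_Ioo {u u' : ℝ → ℝ} {a b x : ℝ} (hab : a < b)
    (hu : ContinuousOn u (Icc a b)) (hu' : ContinuousOn u' (Icc a b))
    (hderiv : ∀ t ∈ Ioo a b, HasDerivAt u (u' t) t) (hx : x ∈ Icc a b) :
    u x ^ 2 ≤
      2 * ((b - a)⁻¹ * (∫ t in Ioo a b, u t ^ 2) + (b - a) * ∫ t in Ioo a b, u' t ^ 2) := by
  set J := ∫ t in Ioo a b, u' t ^ 2
  have hpoint : ∀ y ∈ Ioo a b, u x ^ 2 ≤ 2 * u y ^ 2 + 2 * (b - a) * J := by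
    intro y hy
    have hy' := Ioo_subset_Icc_self hy
    have huIcc : uIcc y x ⊆ Icc a b := ordConnected_Icc.uIcc_subset hy' hx
    have hftc : ∫ t in y..x, u' t = u x - u y :=
      intervalIntegral.integral_eq_sub_of_hasDeriv_right (hu.mono huIcc)
        (fun t ht =>
          (hderiv t (Ioo_subset_Ioo (le_min hy'.1 hx.1) (max_le hy'.2 hx.2) ht)).hasDerivWithinAt)
        ((hu'.mono huIcc).intervalIntegrable)
    calc u x ^ 2 = (u y + ∫ t in y..x, u' t) ^ 2 := by rw [hftc]; ring
      _ ≤ 2 * (u y ^ 2 + (∫ t in y..x, u' t) ^ 2) := add_sq_le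
      _ ≤ 2 * (u y ^ 2 + (b - a) * J) := by
        gcongr; exact sq_intervalIntegral_le_sub_mul_integral_sq hu' hy' hx
      _ = 2 * u y ^ 2 + 2 * (b - a) * J := by ring
  have hu2 : IntegrableOn (fun t => u t ^ 2) (Ioo a b) :=
    ((hu.pow 2).integrableOn_Icc).mono_set Ioo_subset_Icc_self
  have havg := setIntegral_ge_of_const_le_real measurableSet_Ioo (by simp) hpoint
    ((hu2.const_mul 2).add (integrableOn_const (by simp)))
  rw [integral_add (hu2.const_mul 2) (integrableOn_const (by simp)), integral_const_mul,
    setIntegral_const, smul_eq_mul, Real.volume_real_Ioo_of_le hab.le] at havg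
  have hba : 0 < b - a := sub_pos.2 hab
  rw [← mul_le_mul_iff_of_pos_right hba]
  calc u x ^ 2 * (b - a) ≤ 2 * (∫ t in Ioo a b, u t ^ 2) + (b - a) * (2 * (b - a) * J) := havg
    _ = _ := by field_simp

theorem HasFDerivAt.hasDerivAt_slice_fst {𝕜 F : Type*} [NontriviallyNormedField 𝕜]
    [NormedAddCommGroup F] [NormedSpace 𝕜 F] {g : 𝕜 × 𝕜 → F} {g' : 𝕜 × 𝕜 →L[𝕜] F} {p : 𝕜 × 𝕜}
    (hg : HasFDerivAt g g' p) : HasDerivAt (fun t => g (t, p.2)) (g' (1, 0)) p.1 :=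
  hg.comp_hasDerivAt p.1 ((hasDerivAt_id _).prodMk (hasDerivAt_const _ _))

theorem HasFDerivAt.hasDerivAt_slice_snd {𝕜 F : Type*} [NontriviallyNormedField 𝕜]
    [NormedAddCommGroup F] [NormedSpace 𝕜 F] {g : 𝕜 × 𝕜 → F} {g' : 𝕜 × 𝕜 →L[𝕜] F} {p : 𝕜 × 𝕜}
    (hg : HasFDerivAt g g' p) : HasDerivAt (fun s => g (p.1, s)) (g' (0, 1)) p.2 :=
  hg.comp_hasDerivAt p.2 ((hasDerivAt_const _ _).prodMk (hasDerivAt_id _))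

theorem ContDiffOn.hasFDerivAt_fderivWithin {𝕜 E F : Type*} [NontriviallyNormedField 𝕜]
    [NormedAddCommGroup E] [NormedSpace 𝕜 E] [NormedAddCommGroup F] [NormedSpace 𝕜 F]
    {f : E → F} {s : Set E} {x : E} {n : WithTop ℕ∞} (hf : ContDiffOn 𝕜 n f s) (hn : n ≠ 0)
    (hs : s ∈ 𝓝 x) : HasFDerivAt f (fderivWithin 𝕜 f s x) x := by
  rw [fderivWithin_of_mem_nhds hs]
  exact ((hf.contDiffAt hs).differentiableAt hn).hasFDerivAt

theorem IsOpen.eqOn_fderiv_fderivWithin {𝕜 E F : Type*} [NontriviallyNormedField 𝕜]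
    [NormedAddCommGroup E] [NormedSpace 𝕜 E] [NormedAddCommGroup F] [NormedSpace 𝕜 F]
    {f : E → F} {s t : Set E} (ht : IsOpen t) (hts : t ⊆ s) :
    EqOn (fderiv 𝕜 f) (fderivWithin 𝕜 f s) t := fun _ hy =>
  (fderivWithin_of_mem_nhds (mem_of_superset (ht.mem_nhds hy) hts)).symm

theorem IsOpen.eqOn_fderiv_fderiv_apply {𝕜 E F : Type*} [NontriviallyNormedField 𝕜]
    [NormedAddCommGroup E] [NormedSpace 𝕜 E] [NormedAddCommGroup F] [NormedSpace 𝕜 F]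
    {f : E → F} {s t : Set E} (ht : IsOpen t) (hts : t ⊆ s) (v : E) :
    EqOn (fderiv 𝕜 fun q => fderiv 𝕜 f q v)
      (fderivWithin 𝕜 (fun q => fderivWithin 𝕜 f s q v) s) t := fun y hy => by
  have hnear : (fun q => fderiv 𝕜 f q v) =ᶠ[𝓝 y] fun q => fderivWithin 𝕜 f s q v :=
    ((ht.eqOn_fderiv_fderivWithin hts).eventuallyEq_of_mem (ht.mem_nhds hy)).fun_comp (· v)
  rw [hnear.fderiv_eq, ht.eqOn_fderiv_fderivWithin hts hy]

section Rectangle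

variable {a₁ b₁ a₂ b₂ : ℝ}

theorem ContinuousOn.integrableOn_Ioo_prod_Ioo {g : ℝ × ℝ → ℝ}
    (hg : ContinuousOn g (Icc a₁ b₁ ×ˢ Icc a₂ b₂)) :
    IntegrableOn g (Ioo a₁ b₁ ×ˢ Ioo a₂ b₂) :=
  (hg.integrableOn_compact (isCompact_Icc.prod isCompact_Icc)).mono_set
    (prod_mono Ioo_subset_Icc_self Ioo_subset_Icc_self)

theorem integral_Ioo_sq_slice_le {φ ψ : ℝ × ℝ → ℝ} (h₂ : a₂ < b₂)
    (hφ : ContinuousOn φ (Icc a₁ b₁ ×ˢ Icc a₂ b₂)) (hψ : ContinuousOn ψ (Icc a₁ b₁ ×ˢ Icc a₂ b₂))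
    (hderiv : ∀ y ∈ Ioo a₁ b₁ ×ˢ Ioo a₂ b₂, HasDerivAt (fun s => φ (y.1, s)) (ψ y) y.2)
    {x₂ : ℝ} (hx₂ : x₂ ∈ Icc a₂ b₂) :
    ∫ t in Ioo a₁ b₁, φ (t, x₂) ^ 2 ≤
      2 * ((b₂ - a₂)⁻¹ * (∫ y in Ioo a₁ b₁ ×ˢ Ioo a₂ b₂, φ y ^ 2) +
        (b₂ - a₂) * ∫ y in Ioo a₁ b₁ ×ˢ Ioo a₂ b₂, ψ y ^ 2) := by
  have hφ2 := (hφ.pow 2).integrableOn_Ioo_prod_Ioo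
  have hψ2 := (hψ.pow 2).integrableOn_Ioo_prod_Ioo
  rw [IntegrableOn, Measure.volume_eq_prod, ← Measure.prod_restrict] at hφ2 hψ2
  rw [Measure.volume_eq_prod, ← Measure.prod_restrict, integral_prod (fun y => φ y ^ 2) hφ2,
    integral_prod (fun y => ψ y ^ 2) hψ2, ← integral_const_mul, ← integral_const_mul,
    ← integral_add, ← integral_const_mul]
  refine setIntegral_mono_on ?_ ?_ measurableSet_Ioo fun t ht => ?_
  · exact (((hφ.uncurry_right (f := Function.curry φ) x₂ hx₂).pow 2).integrableOn_Icc).mono_set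
      Ioo_subset_Icc_self
  · exact ((hφ2.integral_prod_left.const_mul _).add
      (hψ2.integral_prod_left.const_mul _)).const_mul _
  · have ht' := Ioo_subset_Icc_self ht
    exact sq_le_of_hasDerivAt_Ioo h₂ (hφ.uncurry_left (f := Function.curry φ) t ht')
      (hψ.uncurry_left (f := Function.curry ψ) t ht') (fun s hs => hderiv (t, s) ⟨ht, hs⟩) hx₂
  · exact hφ2.integral_prod_left.const_mul _
  · exact hψ2.integral_prod_left.const_mul _

theorem sq_le_of_hasDerivAt_Ioo_prod_Ioo {f f₁ f₂ f₁₂ : ℝ × ℝ → ℝ} (h₁ : a₁ < b₁) (h₂ : a₂ < b₂)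
    (hf : ContinuousOn f (Icc a₁ b₁ ×ˢ Icc a₂ b₂)) (hf₁ : ContinuousOn f₁ (Icc a₁ b₁ ×ˢ Icc a₂ b₂))
    (hf₂ : ContinuousOn f₂ (Icc a₁ b₁ ×ˢ Icc a₂ b₂))
    (hf₁₂ : ContinuousOn f₁₂ (Icc a₁ b₁ ×ˢ Icc a₂ b₂))
    (hd₁ : ∀ y ∈ Ioo a₁ b₁ ×ˢ Ioo a₂ b₂, HasDerivAt (fun t => f (t, y.2)) (f₁ y) y.1)
    (hd₂ : ∀ y ∈ Ioo a₁ b₁ ×ˢ Ioo a₂ b₂, HasDerivAt (fun s => f (y.1, s)) (f₂ y) y.2)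
    (hd₁₂ : ∀ y ∈ Ioo a₁ b₁ ×ˢ Ioo a₂ b₂, HasDerivAt (fun s => f₁ (y.1, s)) (f₁₂ y) y.2)
    {x : ℝ × ℝ} (hx : x ∈ Ioo a₁ b₁ ×ˢ Ioo a₂ b₂) :
    f x ^ 2 ≤ 4 * (((b₁ - a₁) * (b₂ - a₂))⁻¹ * (∫ y in Ioo a₁ b₁ ×ˢ Ioo a₂ b₂, f y ^ 2) +
      (b₁ - a₁) / (b₂ - a₂) * (∫ y in Ioo a₁ b₁ ×ˢ Ioo a₂ b₂, f₁ y ^ 2) +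
      (b₂ - a₂) / (b₁ - a₁) * (∫ y in Ioo a₁ b₁ ×ˢ Ioo a₂ b₂, f₂ y ^ 2) +
      (b₁ - a₁) * (b₂ - a₂) * ∫ y in Ioo a₁ b₁ ×ˢ Ioo a₂ b₂, f₁₂ y ^ 2) := by
  have hx₂ := Ioo_subset_Icc_self hx.2
  calc f x ^ 2 ≤ 2 * ((b₁ - a₁)⁻¹ * (∫ t in Ioo a₁ b₁, f (t, x.2) ^ 2) +
        (b₁ - a₁) * ∫ t in Ioo a₁ b₁, f₁ (t, x.2) ^ 2) :=
      sq_le_of_hasDerivAt_Ioo h₁ (hf.uncurry_right (f := Function.curry f) x.2 hx₂)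
        (hf₁.uncurry_right (f := Function.curry f₁) x.2 hx₂)
        (fun t ht => hd₁ (t, x.2) ⟨ht, hx.2⟩) (Ioo_subset_Icc_self hx.1)
    _ ≤ 2 * ((b₁ - a₁)⁻¹ * (2 * ((b₂ - a₂)⁻¹ * (∫ y in Ioo a₁ b₁ ×ˢ Ioo a₂ b₂, f y ^ 2) +
          (b₂ - a₂) * ∫ y in Ioo a₁ b₁ ×ˢ Ioo a₂ b₂, f₂ y ^ 2)) +
        (b₁ - a₁) * (2 * ((b₂ - a₂)⁻¹ * (∫ y in Ioo a₁ b₁ ×ˢ Ioo a₂ b₂, f₁ y ^ 2) +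
          (b₂ - a₂) * ∫ y in Ioo a₁ b₁ ×ˢ Ioo a₂ b₂, f₁₂ y ^ 2))) := by
      gcongr
      · exact integral_Ioo_sq_slice_le h₂ hf hf₂ hd₂ hx₂
      · exact integral_Ioo_sq_slice_le h₂ hf₁ hf₁₂ hd₁₂ hx₂
    _ = _ := by field_simp; ring

-- Derivatives within the closed rectangle are continuous up to its boundary, where `fderiv` is junk.
theorem ContDiffOn.sq_le_of_Icc_prod_Icc {f : ℝ × ℝ → ℝ} (h₁ : a₁ < b₁) (h₂ : a₂ < b₂)
    (hf : ContDiffOn ℝ 2 f (Icc a₁ b₁ ×ˢ Icc a₂ b₂)) {x : ℝ × ℝ}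
    (hx : x ∈ Ioo a₁ b₁ ×ˢ Ioo a₂ b₂) :
    f x ^ 2 ≤ 4 * (((b₁ - a₁) * (b₂ - a₂))⁻¹ * (∫ y in Ioo a₁ b₁ ×ˢ Ioo a₂ b₂, f y ^ 2) +
      (b₁ - a₁) / (b₂ - a₂) *
        (∫ y in Ioo a₁ b₁ ×ˢ Ioo a₂ b₂, fderivWithin ℝ f (Icc a₁ b₁ ×ˢ Icc a₂ b₂) y (1, 0) ^ 2) +
      (b₂ - a₂) / (b₁ - a₁) *
        (∫ y in Ioo a₁ b₁ ×ˢ Ioo a₂ b₂, fderivWithin ℝ f (Icc a₁ b₁ ×ˢ Icc a₂ b₂) y (0, 1) ^ 2) +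
      (b₁ - a₁) * (b₂ - a₂) * ∫ y in Ioo a₁ b₁ ×ˢ Ioo a₂ b₂,
        fderivWithin ℝ (fun q => fderivWithin ℝ f (Icc a₁ b₁ ×ˢ Icc a₂ b₂) q (1, 0))
          (Icc a₁ b₁ ×ˢ Icc a₂ b₂) y (0, 1) ^ 2) := by
  set K := Icc a₁ b₁ ×ˢ Icc a₂ b₂
  have hK : UniqueDiffOn ℝ K := (uniqueDiffOn_Icc h₁).prod (uniqueDiffOn_Icc h₂)
  have hKnhds : ∀ y ∈ Ioo a₁ b₁ ×ˢ Ioo a₂ b₂, K ∈ 𝓝 y := fun y hy =>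
    mem_of_superset ((isOpen_Ioo.prod isOpen_Ioo).mem_nhds hy)
      (prod_mono Ioo_subset_Icc_self Ioo_subset_Icc_self)
  have hDf : ContDiffOn ℝ 1 (fderivWithin ℝ f K) K := hf.fderivWithin hK (by norm_num)
  have hf₁ : ContDiffOn ℝ 1 (fun y => fderivWithin ℝ f K y (1, 0)) K :=
    hDf.clm_apply contDiffOn_const
  exact sq_le_of_hasDerivAt_Ioo_prod_Ioo h₁ h₂ hf.continuousOn hf₁.continuousOn
    (hDf.clm_apply contDiffOn_const).continuousOn
    ((hf₁.continuousOn_fderivWithin hK le_rfl).clm_apply continuousOn_const)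
    (fun y hy => (hf.hasFDerivAt_fderivWithin two_ne_zero (hKnhds y hy)).hasDerivAt_slice_fst)
    (fun y hy => (hf.hasFDerivAt_fderivWithin two_ne_zero (hKnhds y hy)).hasDerivAt_slice_snd)
    (fun y hy => (hf₁.hasFDerivAt_fderivWithin one_ne_zero (hKnhds y hy)).hasDerivAt_slice_snd) hx

end Rectangle

/-- Pointwise Sobolev-type embedding on a square of sidelength `δ`:
`|f(x)|² ≤ 4 ( δ⁻² ∫ |f|² + ∫ |∇f|² + δ² ∫ |∂₂∂₁ f|² )`. -/
theorem square_sobolev_embedding (a₁ b₁ a₂ b₂ δ : ℝ) (hδ : 0 < δ)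
    (h₁ : b₁ - a₁ = δ) (h₂ : b₂ - a₂ = δ) (f : ℝ × ℝ → ℝ)
    (hf : ContDiffOn ℝ 2 f (closure ((Set.Ioo a₁ b₁) ×ˢ (Set.Ioo a₂ b₂))))
    (x : ℝ × ℝ) (hx : x ∈ (Set.Ioo a₁ b₁) ×ˢ (Set.Ioo a₂ b₂)) :
    |f x| ^ 2 ≤
      4 * ((1 / δ ^ 2) * (∫ y in (Set.Ioo a₁ b₁) ×ˢ (Set.Ioo a₂ b₂), (f y) ^ 2) +
        (∫ y in (Set.Ioo a₁ b₁) ×ˢ (Set.Ioo a₂ b₂),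
          ((fderiv ℝ f y (1, 0)) ^ 2 + (fderiv ℝ f y (0, 1)) ^ 2)) +
        δ ^ 2 * (∫ y in (Set.Ioo a₁ b₁) ×ˢ (Set.Ioo a₂ b₂),
          (fderiv ℝ (fun q => fderiv ℝ f q (1, 0)) y (0, 1)) ^ 2)) := by
  have hab₁ : a₁ < b₁ := by linarith
  have hab₂ : a₂ < b₂ := by linarith
  rw [closure_prod_eq, closure_Ioo hab₁.ne, closure_Ioo hab₂.ne] at hf
  have hbound := hf.sq_le_of_Icc_prod_Icc hab₁ hab₂ hx
  set K := Icc a₁ b₁ ×ˢ Icc a₂ b₂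
  set U := Ioo a₁ b₁ ×ˢ Ioo a₂ b₂
  have hU : IsOpen U := isOpen_Ioo.prod isOpen_Ioo
  have hUK : U ⊆ K := prod_mono Ioo_subset_Icc_self Ioo_subset_Icc_self
  have hgrad : EqOn (fun y => fderiv ℝ f y (1, 0) ^ 2 + fderiv ℝ f y (0, 1) ^ 2)
      (fun y => fderivWithin ℝ f K y (1, 0) ^ 2 + fderivWithin ℝ f K y (0, 1) ^ 2) U :=
    fun y hy => by simp only [hU.eqOn_fderiv_fderivWithin hUK hy]
  have hmixed : EqOn (fun y => fderiv ℝ (fun q => fderiv ℝ f q (1, 0)) y (0, 1) ^ 2)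
      (fun y => fderivWithin ℝ (fun q => fderivWithin ℝ f K q (1, 0)) K y (0, 1) ^ 2) U :=
    fun y hy => by simp only [hU.eqOn_fderiv_fderiv_apply hUK (1, 0) hy]
  have hDf := hf.continuousOn_fderivWithin
    ((uniqueDiffOn_Icc hab₁).prod (uniqueDiffOn_Icc hab₂)) one_le_two
  rw [setIntegral_congr_fun hU.measurableSet hgrad, setIntegral_congr_fun hU.measurableSet hmixed,
    integral_add ?_ ?_, sq_abs]
  · rw [h₁, h₂] at hbound
    calc f x ^ 2 ≤ _ := hbound
      _ = _ := by field_simp; ring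
  all_goals exact ((hDf.clm_apply continuousOn_const).pow 2).integrableOn_Ioo_prod_Ioo
end

section
/- Let $p$ be a real polynomial on $\mathbb{C}$, $T(w,z) = -2\,\mathrm{Im}\big(\sum_{j\ge 1}\frac{1}{j!}\frac{\partial^j p(z)}{\partial z^j}(w-z)^j\big)$, $M_{\tau p} = \partial_\tau - iT(w,z)$ (acting in $(\tau, z)$ with parameter $w$), and $e(w,z) = \sum_{j\ge 1}\frac{1}{j!}\frac{\partial^{j+1}p(z)}{\partial z^j \partial\bar z}(w-z)^j$. Then $[M_{\tau p}, \bar Z_{\tau p, z}] = -e(w,z)$ and $[M_{\tau p}, Z_{\tau p, z}] = \overline{e(w,z)}$, as operators on smooth functions of $(\tau, z)$. -/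
open Finset

open Complex ContDiff

section basics

variable {f g : ℂ → ℂ} {z : ℂ} {c : ℂ}

lemma contDiff_wd (hf : ContDiff ℝ ∞ f) : ContDiff ℝ ∞ (WD f) := by
  have h1 : ContDiff ℝ ∞ (fderiv ℝ f) := hf.fderiv_right (by simp)
  exact (((h1.clm_apply contDiff_const).sub
    (contDiff_const.mul (h1.clm_apply contDiff_const)))).div_const 2

lemma contDiff_wdbar (hf : ContDiff ℝ ∞ f) : ContDiff ℝ ∞ (WDbar f) := by
  have h1 : ContDiff ℝ ∞ (fderiv ℝ f) := hf.fderiv_right (by simp)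
  exact (((h1.clm_apply contDiff_const).add
    (contDiff_const.mul (h1.clm_apply contDiff_const)))).div_const 2

lemma wd_add (hf : DifferentiableAt ℝ f z) (hg : DifferentiableAt ℝ g z) :
    WD (fun x => f x + g x) z = WD f z + WD g z := by
  simp only [WD, fderiv_fun_add hf hg]
  simp [ContinuousLinearMap.add_apply]; ring

lemma wdbar_add (hf : DifferentiableAt ℝ f z) (hg : DifferentiableAt ℝ g z) :
    WDbar (fun x => f x + g x) z = WDbar f z + WDbar g z := by
  simp only [WDbar, fderiv_fun_add hf hg]
  simp [ContinuousLinearMap.add_apply]; ring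

lemma wd_const_mul (hf : DifferentiableAt ℝ f z) (c : ℂ) :
    WD (fun x => c * f x) z = c * WD f z := by
  simp only [WD, fderiv_const_mul hf c]
  simp [ContinuousLinearMap.smul_apply, smul_eq_mul]; ring

lemma wdbar_const_mul (hf : DifferentiableAt ℝ f z) (c : ℂ) :
    WDbar (fun x => c * f x) z = c * WDbar f z := by
  simp only [WDbar, fderiv_const_mul hf c]
  simp [ContinuousLinearMap.smul_apply, smul_eq_mul]; ring

lemma wd_mul (hf : DifferentiableAt ℝ f z) (hg : DifferentiableAt ℝ g z) :
    WD (fun x => f x * g x) z = WD f z * g z + f z * WD g z := by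
  simp only [WD, fderiv_fun_mul hf hg]
  simp [ContinuousLinearMap.add_apply, ContinuousLinearMap.smul_apply, smul_eq_mul]; ring

lemma wdbar_mul (hf : DifferentiableAt ℝ f z) (hg : DifferentiableAt ℝ g z) :
    WDbar (fun x => f x * g x) z = WDbar f z * g z + f z * WDbar g z := by
  simp only [WDbar, fderiv_fun_mul hf hg]
  simp [ContinuousLinearMap.add_apply, ContinuousLinearMap.smul_apply, smul_eq_mul]; ring

lemma wd_holo (hf : DifferentiableAt ℂ f z) : WD f z = deriv f z := by
  have h : fderiv ℝ f z = (fderiv ℂ f z).restrictScalars ℝ := hf.fderiv_restrictScalars ℝ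
  have h2 : ∀ v : ℂ, fderiv ℝ f z v = deriv f z * v := by
    intro v
    rw [h]
    show fderiv ℂ f z v = _
    have : fderiv ℂ f z v = v • fderiv ℂ f z 1 := by
      rw [← ContinuousLinearMap.map_smul]; norm_num
    rw [this]; simp [fderiv_apply_one_eq_deriv]; ring
  simp only [WD, h2]
  rw [show (Complex.I:ℂ)*(deriv f z * Complex.I) = -deriv f z by
    rw [mul_comm (deriv f z)]; rw [← mul_assoc, Complex.I_mul_I]; ring]
  ring

lemma wdbar_holo (hf : DifferentiableAt ℂ f z) : WDbar f z = 0 := by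
  have h : fderiv ℝ f z = (fderiv ℂ f z).restrictScalars ℝ := hf.fderiv_restrictScalars ℝ
  have h2 : ∀ v : ℂ, fderiv ℝ f z v = deriv f z * v := by
    intro v
    rw [h]
    show fderiv ℂ f z v = _
    have : fderiv ℂ f z v = v • fderiv ℂ f z 1 := by
      rw [← ContinuousLinearMap.map_smul]; norm_num
    rw [this]; simp [fderiv_apply_one_eq_deriv]; ring
  simp only [WDbar, h2]
  rw [show (Complex.I:ℂ)*(deriv f z * Complex.I) = -deriv f z by
    rw [mul_comm (deriv f z)]; rw [← mul_assoc, Complex.I_mul_I]; ring]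
  ring

end basics

section conj

variable {f : ℂ → ℂ} {z : ℂ}

lemma fderiv_conj_comp (hf : DifferentiableAt ℝ f z) (v : ℂ) :
    fderiv ℝ (fun x => starRingEnd ℂ (f x)) z v = starRingEnd ℂ (fderiv ℝ f z v) := by
  have h : HasFDerivAt (fun x => starRingEnd ℂ (f x))
      ((Complex.conjCLE.toContinuousLinearMap).comp (fderiv ℝ f z)) z :=
    (Complex.conjCLE.toContinuousLinearMap.hasFDerivAt).comp z hf.hasFDerivAt
  rw [h.fderiv]; rfl

lemma wd_conj (hf : DifferentiableAt ℝ f z) :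
    WD (fun x => starRingEnd ℂ (f x)) z = starRingEnd ℂ (WDbar f z) := by
  simp only [WD, WDbar, fderiv_conj_comp hf]
  rw [map_div₀, map_add, map_mul]
  simp only [Complex.conj_I, map_ofNat]; ring

lemma wdbar_conj (hf : DifferentiableAt ℝ f z) :
    WDbar (fun x => starRingEnd ℂ (f x)) z = starRingEnd ℂ (WD f z) := by
  simp only [WD, WDbar, fderiv_conj_comp hf]
  rw [map_div₀, map_sub, map_mul]
  simp only [Complex.conj_I, map_ofNat]; ring

end conj

lemma one_le_inf : (1 : WithTop ℕ∞) ≤ ∞ := by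
  exact_mod_cast (le_top : (1:ℕ∞) ≤ ⊤)

lemma inf_ne_zero : (∞ : WithTop ℕ∞) ≠ 0 := by
  simp

lemma two_le_inf : (2 : WithTop ℕ∞) ≤ ∞ := by
  rw [show ((2:WithTop ℕ∞)) = ((2:ℕ∞):WithTop ℕ∞) by rfl]
  exact_mod_cast (le_top : (2:ℕ∞) ≤ ⊤)

section symm

variable {E : Type*} [NormedAddCommGroup E] [NormedSpace ℝ E]

lemma fderiv_apply_comm {f : E → ℂ} (hf : ContDiff ℝ ∞ f) (x u v : E) :
    fderiv ℝ (fun y => fderiv ℝ f y u) x v = fderiv ℝ (fun y => fderiv ℝ f y v) x u := by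
  have hd : ContDiff ℝ ∞ (fderiv ℝ f) := hf.fderiv_right (by simp)
  have h1 : ∀ w : E, fderiv ℝ (fun y => fderiv ℝ f y w) x
      = (fderiv ℝ (fderiv ℝ f) x).flip w := by
    intro w
    rw [fderiv_clm_apply ((hd.differentiable inf_ne_zero) x) (differentiableAt_const w)]
    ext v'
    simp
  have hsymm : IsSymmSndFDerivAt ℝ f x :=
    (hf.contDiffAt).isSymmSndFDerivAt (by rw [minSmoothness_of_isRCLikeNormedField]; exact two_le_inf)
  rw [h1 u, h1 v]
  simp only [ContinuousLinearMap.flip_apply]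
  exact hsymm v u

lemma contDiff_fderiv_apply {f : E → ℂ} (hf : ContDiff ℝ ∞ f) (v : E) :
    ContDiff ℝ ∞ (fun y => fderiv ℝ f y v) :=
  (hf.fderiv_right (by simp)).clm_apply contDiff_const

end symm

section comm

lemma wd_wdbar_comm {f : ℂ → ℂ} (hf : ContDiff ℝ ∞ f) (z : ℂ) :
    WD (WDbar f) z = WDbar (WD f) z := by
  have hdf : ∀ v : ℂ, DifferentiableAt ℝ (fun y => fderiv ℝ f y v) z :=
    fun v => ((contDiff_fderiv_apply hf v).differentiable inf_ne_zero) z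
  have hWDbar : WDbar f = fun y => (fderiv ℝ f y 1 + Complex.I * fderiv ℝ f y Complex.I) / 2 := rfl
  have hWD : WD f = fun y => (fderiv ℝ f y 1 - Complex.I * fderiv ℝ f y Complex.I) / 2 := rfl
  have e1 : ∀ u : ℂ, fderiv ℝ (WDbar f) z u
      = (fderiv ℝ (fun y => fderiv ℝ f y 1) z u
        + Complex.I * fderiv ℝ (fun y => fderiv ℝ f y Complex.I) z u) / 2 := by
    intro u
    rw [hWDbar]
    have : (fun y => ((fderiv ℝ f y) 1 + Complex.I * (fderiv ℝ f y) Complex.I) / 2)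
        = fun y => (2:ℂ)⁻¹ * ((fderiv ℝ f y) 1 + Complex.I * (fderiv ℝ f y) Complex.I) := by
      funext y; ring
    rw [this, fderiv_const_mul ((hdf 1).fun_add ((hdf Complex.I).const_mul _)),
      fderiv_fun_add (hdf 1) ((hdf Complex.I).const_mul _), fderiv_const_mul (hdf Complex.I)]
    simp; ring
  have e2 : ∀ u : ℂ, fderiv ℝ (WD f) z u
      = (fderiv ℝ (fun y => fderiv ℝ f y 1) z u
        - Complex.I * fderiv ℝ (fun y => fderiv ℝ f y Complex.I) z u) / 2 := by
    intro u
    rw [hWD]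
    have : (fun y => ((fderiv ℝ f y) 1 - Complex.I * (fderiv ℝ f y) Complex.I) / 2)
        = fun y => (2:ℂ)⁻¹ * ((fderiv ℝ f y) 1 - Complex.I * (fderiv ℝ f y) Complex.I) := by
      funext y; ring
    rw [this, fderiv_const_mul ((hdf 1).fun_sub ((hdf Complex.I).const_mul _)),
      fderiv_fun_sub (hdf 1) ((hdf Complex.I).const_mul _), fderiv_const_mul (hdf Complex.I)]
    simp; ring
  simp only [WD, WDbar, e1, e2]
  rw [fderiv_apply_comm hf z 1 Complex.I]
  ring

end comm

section poly

lemma contDiff_conj : ContDiff ℝ ∞ (fun z : ℂ => starRingEnd ℂ z) :=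
  Complex.conjCLE.contDiff.of_le le_top

lemma contDiff_mono (c : ℂ) (m n : ℕ) :
    ContDiff ℝ ∞ (fun z : ℂ => c * z ^ m * (starRingEnd ℂ z) ^ n) :=
  (contDiff_const.mul (contDiff_id.pow m)).mul (contDiff_conj.pow n)

lemma wd_sum {ι : Type*} (s : Finset ι) (f : ι → ℂ → ℂ) {z : ℂ}
    (hf : ∀ i ∈ s, DifferentiableAt ℝ (f i) z) :
    WD (fun x => ∑ i ∈ s, f i x) z = ∑ i ∈ s, WD (f i) z := by
  classical
  induction s using Finset.induction_on with
  | empty => simp [WD]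
  | @insert i s' hni ih =>
    have h1 : DifferentiableAt ℝ (f i) z := hf i (Finset.mem_insert_self i s')
    have h2 : DifferentiableAt ℝ (fun x => ∑ j ∈ s', f j x) z :=
      DifferentiableAt.fun_sum (fun j hj => hf j (Finset.mem_insert_of_mem hj))
    have hfe : (fun x => ∑ j ∈ insert i s', f j x) = fun x => f i x + ∑ j ∈ s', f j x := by
      funext x; rw [Finset.sum_insert hni]
    rw [hfe, wd_add h1 h2, ih (fun j hj => hf j (Finset.mem_insert_of_mem hj)),
      Finset.sum_insert hni]

lemma wdbar_sum {ι : Type*} (s : Finset ι) (f : ι → ℂ → ℂ) {z : ℂ}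
    (hf : ∀ i ∈ s, DifferentiableAt ℝ (f i) z) :
    WDbar (fun x => ∑ i ∈ s, f i x) z = ∑ i ∈ s, WDbar (f i) z := by
  classical
  induction s using Finset.induction_on with
  | empty => simp [WDbar]
  | @insert i s' hni ih =>
    have h1 : DifferentiableAt ℝ (f i) z := hf i (Finset.mem_insert_self i s')
    have h2 : DifferentiableAt ℝ (fun x => ∑ j ∈ s', f j x) z :=
      DifferentiableAt.fun_sum (fun j hj => hf j (Finset.mem_insert_of_mem hj))
    have hfe : (fun x => ∑ j ∈ insert i s', f j x) = fun x => f i x + ∑ j ∈ s', f j x := by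
      funext x; rw [Finset.sum_insert hni]
    rw [hfe, wdbar_add h1 h2, ih (fun j hj => hf j (Finset.mem_insert_of_mem hj)),
      Finset.sum_insert hni]

lemma wd_pow (m : ℕ) (z : ℂ) : WD (fun x : ℂ => x ^ m) z = m * z ^ (m - 1) := by
  rw [wd_holo (differentiableAt_pow (𝕜 := ℂ) m)]
  simp [deriv_pow]

lemma wd_conj_pow (n : ℕ) (z : ℂ) : WD (fun x : ℂ => (starRingEnd ℂ x) ^ n) z = 0 := by
  have : (fun x : ℂ => (starRingEnd ℂ x) ^ n) = fun x => starRingEnd ℂ (x ^ n) := by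
    funext x; rw [map_pow]
  rw [this, wd_conj ((differentiableAt_pow (𝕜 := ℂ) n).restrictScalars ℝ), wdbar_holo (differentiableAt_pow (𝕜 := ℂ) n)]
  · simp
lemma wdbar_conj_pow (n : ℕ) (z : ℂ) :
    WDbar (fun x : ℂ => (starRingEnd ℂ x) ^ n) z = n * (starRingEnd ℂ z) ^ (n - 1) := by
  have : (fun x : ℂ => (starRingEnd ℂ x) ^ n) = fun x => starRingEnd ℂ (x ^ n) := by
    funext x; rw [map_pow]
  rw [this, wdbar_conj ((differentiableAt_pow (𝕜 := ℂ) n).restrictScalars ℝ), wd_pow]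
  simp

lemma wd_mono (c : ℂ) (m n : ℕ) (z : ℂ) :
    WD (fun x : ℂ => c * x ^ m * (starRingEnd ℂ x) ^ n) z
      = (m : ℂ) * (c * z ^ (m - 1) * (starRingEnd ℂ z) ^ n) := by
  have d1 : DifferentiableAt ℝ (fun x : ℂ => c * x ^ m) z :=
    ((differentiableAt_pow (𝕜 := ℂ) m).restrictScalars ℝ).const_mul c
  have d2 : DifferentiableAt ℝ (fun x : ℂ => (starRingEnd ℂ x) ^ n) z := by
    have := ((contDiff_conj.pow n).differentiable inf_ne_zero) z
    exact this
  rw [wd_mul d1 d2, wd_const_mul ((differentiableAt_pow (𝕜 := ℂ) m).restrictScalars ℝ) c,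
    wd_pow, wd_conj_pow]
  ring

end poly

section ppoly

lemma contDiff_wd_iter {f : ℂ → ℂ} (hf : ContDiff ℝ ∞ f) (j : ℕ) :
    ContDiff ℝ ∞ (WD^[j] f) := by
  induction j with
  | zero => exact hf
  | succ j ih => rw [Function.iterate_succ_apply']; exact contDiff_wd ih

lemma contDiff_wdbar_iter {f : ℂ → ℂ} (hf : ContDiff ℝ ∞ f) (k : ℕ) :
    ContDiff ℝ ∞ (WDbar^[k] f) := by
  induction k with
  | zero => exact hf
  | succ k ih => rw [Function.iterate_succ_apply']; exact contDiff_wdbar ih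

variable {p : ℂ → ℂ} {D : ℕ} {a : ℕ → ℕ → ℂ}

lemma contDiff_of_poly
    (ha : ∀ z, p z = ∑ m ∈ range (D+1), ∑ n ∈ range (D+1),
      a m n * z^m * (starRingEnd ℂ z)^n) : ContDiff ℝ ∞ p := by
  have : p = fun z => ∑ m ∈ range (D+1), ∑ n ∈ range (D+1),
      a m n * z^m * (starRingEnd ℂ z)^n := funext ha
  rw [this]
  exact ContDiff.sum fun m _ => ContDiff.sum fun n _ => contDiff_mono (a m n) m n

lemma wd_iter_poly
    (ha : ∀ z, p z = ∑ m ∈ range (D+1), ∑ n ∈ range (D+1),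
      a m n * z^m * (starRingEnd ℂ z)^n) (j : ℕ) :
    WD^[j] p = fun z => ∑ m ∈ range (D+1), ∑ n ∈ range (D+1),
      (a m n * ∏ i ∈ range j, ((m - i : ℕ) : ℂ)) * z ^ (m - j) * (starRingEnd ℂ z) ^ n := by
  induction j with
  | zero => funext z; simp [ha z]
  | succ j ih =>
    funext z
    rw [Function.iterate_succ_apply', ih]
    rw [wd_sum _ _ (fun m _ => DifferentiableAt.fun_sum fun n _ =>
      ((contDiff_mono _ _ n).differentiable inf_ne_zero z))]
    refine Finset.sum_congr rfl fun m _ => ?_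
    rw [wd_sum _ _ (fun n _ => ((contDiff_mono _ _ n).differentiable inf_ne_zero z))]
    refine Finset.sum_congr rfl fun n _ => ?_
    rw [wd_mono]
    rw [Finset.prod_range_succ, Nat.sub_sub]
    ring

lemma wd_iter_top
    (ha : ∀ z, p z = ∑ m ∈ range (D+1), ∑ n ∈ range (D+1),
      a m n * z^m * (starRingEnd ℂ z)^n) (z : ℂ) :
    WD^[D+1] p z = 0 := by
  rw [wd_iter_poly ha (D+1)]
  refine Finset.sum_eq_zero fun m hm => Finset.sum_eq_zero fun n _ => ?_
  have : (∏ i ∈ range (D+1), ((m - i : ℕ) : ℂ)) = 0 :=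
    Finset.prod_eq_zero hm (by simp)
  rw [this]
  ring

end ppoly

section subs

variable {f g : ℂ → ℂ} {z : ℂ}

lemma wd_sub (hf : DifferentiableAt ℝ f z) (hg : DifferentiableAt ℝ g z) :
    WD (fun x => f x - g x) z = WD f z - WD g z := by
  simp only [WD, fderiv_fun_sub hf hg]
  simp [ContinuousLinearMap.sub_apply]; ring

lemma wdbar_sub (hf : DifferentiableAt ℝ f z) (hg : DifferentiableAt ℝ g z) :
    WDbar (fun x => f x - g x) z = WDbar f z - WDbar g z := by
  simp only [WDbar, fderiv_fun_sub hf hg]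
  simp [ContinuousLinearMap.sub_apply]; ring

end subs

section acoef

variable {p : ℂ → ℂ} {D : ℕ} {a : ℕ → ℕ → ℂ}

lemma contDiff_Acoef (hp : ContDiff ℝ ∞ p) (j k : ℕ) : ContDiff ℝ ∞ (Acoef p j k) :=
  contDiff_const.mul (contDiff_wd_iter (contDiff_wdbar_iter hp k) j)

lemma wdbar_wd_iter {f : ℂ → ℂ} (hf : ContDiff ℝ ∞ f) (j : ℕ) :
    WDbar (WD^[j] f) = WD^[j] (WDbar f) := by
  induction j with
  | zero => rfl
  | succ j ih =>
    rw [Function.iterate_succ_apply', Function.iterate_succ_apply', ← ih]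
    funext z
    exact (wd_wdbar_comm (contDiff_wd_iter hf j) z).symm

lemma wdbar_acoef0 (hp : ContDiff ℝ ∞ p) (j : ℕ) (z : ℂ) :
    WDbar (Acoef p j 0) z = Acoef p j 1 z := by
  have h0 : Acoef p j 0 = fun x => (1 / (Nat.factorial j : ℂ)) * WD^[j] p x := by
    funext x; simp [Acoef]
  rw [h0, wdbar_const_mul (((contDiff_wd_iter hp j).differentiable inf_ne_zero) z)]
  have : WDbar (WD^[j] p) z = WD^[j] (WDbar p) z := by rw [wdbar_wd_iter hp j]
  rw [this]
  simp [Acoef]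

lemma wd_acoef0 (hp : ContDiff ℝ ∞ p) (j : ℕ) (z : ℂ) :
    WD (Acoef p j 0) z = ((j : ℂ) + 1) * Acoef p (j+1) 0 z := by
  have h0 : Acoef p j 0 = fun x => (1 / (Nat.factorial j : ℂ)) * WD^[j] p x := by
    funext x; simp [Acoef]
  rw [h0, wd_const_mul (((contDiff_wd_iter hp j).differentiable inf_ne_zero) z)]
  have h1 : WD (WD^[j] p) z = WD^[j+1] p z := by
    rw [Function.iterate_succ_apply']
  rw [h1]
  have hA : Acoef p (j+1) 0 z
      = (1/((((j+1).factorial : ℕ):ℂ) * ((Nat.factorial 0 : ℕ):ℂ))) * WD^[j+1] p z := rfl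
  rw [hA, ← mul_assoc]
  have hf : ((Nat.factorial j : ℕ):ℂ) ≠ 0 := Nat.cast_ne_zero.2 (Nat.factorial_ne_zero j)
  have hf1 : (((j+1).factorial : ℕ):ℂ) ≠ 0 := Nat.cast_ne_zero.2 (Nat.factorial_ne_zero (j+1))
  have hc : ((j:ℂ)+1) * (1/((((j+1).factorial : ℕ):ℂ) * ((Nat.factorial 0 : ℕ):ℂ)))
      = 1/((Nat.factorial j : ℕ):ℂ) := by
    have hfe : (((j+1).factorial : ℕ):ℂ) = ((j:ℂ)+1) * ((Nat.factorial j : ℕ):ℂ) := by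
      rw [Nat.factorial_succ]; push_cast; ring
    rw [Nat.factorial_zero, hfe, Nat.cast_one, mul_one, one_div, mul_inv,
      ← mul_assoc, mul_inv_cancel₀ (Nat.cast_add_one_ne_zero j), one_mul, one_div]
  rw [hc]

lemma acoef10 (z : ℂ) : Acoef p 1 0 z = WD p z := by
  simp [Acoef]

lemma acoef_top
    (ha : ∀ z, p z = ∑ m ∈ range (D+1), ∑ n ∈ range (D+1),
      a m n * z^m * (starRingEnd ℂ z)^n) (z : ℂ) :
    Acoef p (D+1) 0 z = 0 := by
  simp only [Acoef, Function.iterate_zero, id_eq]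
  rw [wd_iter_top ha z, mul_zero]

lemma conj_wd_real (hp : ContDiff ℝ ∞ p) (hreal : ∀ z, (p z).im = 0) (z : ℂ) :
    starRingEnd ℂ (WD p z) = WDbar p z := by
  have hpc : p = fun x => starRingEnd ℂ (p x) := by
    funext x
    exact (Complex.conj_eq_iff_im.2 (hreal x)).symm
  conv_rhs => rw [hpc]
  rw [wdbar_conj ((hp.differentiable inf_ne_zero) z)]

end acoef

section stw

variable {p : ℂ → ℂ} {D : ℕ} {a : ℕ → ℕ → ℂ} {w : ℂ}

noncomputable def Sfun (p : ℂ → ℂ) (D : ℕ) (w : ℂ) : ℂ → ℂ :=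
  fun ζ => ∑ j ∈ Finset.Icc 1 D, Acoef p j 0 ζ * (w - ζ) ^ j

lemma contDiff_pow_sub (j : ℕ) : ContDiff ℝ ∞ (fun ζ : ℂ => (w - ζ) ^ j) :=
  ((contDiff_const.sub contDiff_id).pow j)

lemma contDiff_Sfun (hp : ContDiff ℝ ∞ p) : ContDiff ℝ ∞ (Sfun p D w) :=
  ContDiff.sum fun j _ => (contDiff_Acoef hp j 0).mul (contDiff_pow_sub j)

lemma hasDerivAt_pow_sub (j : ℕ) (z : ℂ) :
    HasDerivAt (fun ζ : ℂ => (w - ζ) ^ j) ((j : ℂ) * (w - z) ^ (j - 1) * (-1)) z := by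
  have h : HasDerivAt (fun ζ : ℂ => w - ζ) (-1) z := (hasDerivAt_id z).const_sub w
  exact h.pow j

lemma wdbar_pow_sub (j : ℕ) (z : ℂ) : WDbar (fun ζ : ℂ => (w - ζ) ^ j) z = 0 :=
  wdbar_holo (hasDerivAt_pow_sub j z).differentiableAt

lemma wd_pow_sub (j : ℕ) (z : ℂ) :
    WD (fun ζ : ℂ => (w - ζ) ^ j) z = -((j : ℂ) * (w - z) ^ (j - 1)) := by
  rw [wd_holo (hasDerivAt_pow_sub j z).differentiableAt, (hasDerivAt_pow_sub j z).deriv]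
  ring

lemma wdbar_Sfun (hp : ContDiff ℝ ∞ p) (z : ℂ) :
    WDbar (Sfun p D w) z = efun p D w z := by
  unfold Sfun
  rw [wdbar_sum _ _ (fun j _ =>
    (((contDiff_Acoef hp j 0).mul (contDiff_pow_sub j)).differentiable inf_ne_zero) z)]
  refine Finset.sum_congr rfl fun j _ => ?_
  rw [wdbar_mul (((contDiff_Acoef hp j 0).differentiable inf_ne_zero) z)
    (((contDiff_pow_sub (w := w) j).differentiable inf_ne_zero) z),
    wdbar_acoef0 hp j z, wdbar_pow_sub j z]
  ring

lemma telescope (t : ℕ → ℂ) (D : ℕ) :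
    ∑ j ∈ Finset.Icc 1 D, (t (j+1) - t j) = t (D+1) - t 1 := by
  induction D with
  | zero => simp
  | succ D ih => rw [Finset.sum_Icc_succ_top (Nat.le_add_left 1 D), ih]; ring

lemma wd_Sfun (hp : ContDiff ℝ ∞ p)
    (ha : ∀ z, p z = ∑ m ∈ range (D+1), ∑ n ∈ range (D+1),
      a m n * z^m * (starRingEnd ℂ z)^n) (z : ℂ) :
    WD (Sfun p D w) z = -(WD p z) := by
  unfold Sfun
  rw [wd_sum _ _ (fun j _ =>
    (((contDiff_Acoef hp j 0).mul (contDiff_pow_sub j)).differentiable inf_ne_zero) z)]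
  set t : ℕ → ℂ := fun i => (i:ℂ) * Acoef p i 0 z * (w - z)^(i-1) with ht
  have hterm : ∀ j, WD (fun ζ => Acoef p j 0 ζ * (w - ζ) ^ j) z = t (j+1) - t j := by
    intro j
    rw [wd_mul (((contDiff_Acoef hp j 0).differentiable inf_ne_zero) z)
      (((contDiff_pow_sub (w := w) j).differentiable inf_ne_zero) z),
      wd_acoef0 hp j z, wd_pow_sub j z, ht]
    simp only [Nat.add_sub_cancel]
    push_cast
    ring
  rw [Finset.sum_congr rfl fun j _ => hterm j, telescope t D, ht]
  simp only [acoef_top ha z, acoef10 z]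
  simp

end stw

section tc

variable {p : ℂ → ℂ} {D : ℕ} {a : ℕ → ℕ → ℂ} {w : ℂ}

lemma Tc_eq (p : ℂ → ℂ) (D : ℕ) (w z : ℂ) :
    ((Ttwist p D w z : ℝ) : ℂ)
      = Complex.I * (Sfun p D w z - starRingEnd ℂ (Sfun p D w z)) := by
  have h : Ttwist p D w z = -2 * (Sfun p D w z).im := rfl
  rw [h, Complex.sub_conj,
    show (Complex.I * (((2*(Sfun p D w z).im :ℝ):ℂ) * Complex.I) : ℂ)
      = ((2*(Sfun p D w z).im:ℝ):ℂ) * (Complex.I*Complex.I) by ring, Complex.I_mul_I]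
  push_cast
  ring

lemma Tcfun_eq (p : ℂ → ℂ) (D : ℕ) (w : ℂ) :
    (fun ζ => ((Ttwist p D w ζ : ℝ) : ℂ))
      = fun ζ => Complex.I * (Sfun p D w ζ - starRingEnd ℂ (Sfun p D w ζ)) :=
  funext fun z => Tc_eq p D w z

lemma contDiff_Tc (hp : ContDiff ℝ ∞ p) :
    ContDiff ℝ ∞ (fun ζ => ((Ttwist p D w ζ : ℝ) : ℂ)) := by
  rw [Tcfun_eq]
  exact contDiff_const.mul ((contDiff_Sfun hp).sub (contDiff_conj.comp (contDiff_Sfun hp)))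

lemma wdbar_Tc (hp : ContDiff ℝ ∞ p) (hreal : ∀ z, (p z).im = 0)
    (ha : ∀ z, p z = ∑ m ∈ range (D+1), ∑ n ∈ range (D+1),
      a m n * z^m * (starRingEnd ℂ z)^n) (z : ℂ) :
    Complex.I * WDbar (fun ζ => ((Ttwist p D w ζ : ℝ) : ℂ)) z
      = -(efun p D w z) - WDbar p z := by
  rw [Tcfun_eq]
  have dS : DifferentiableAt ℝ (Sfun p D w) z :=
    ((contDiff_Sfun hp).differentiable inf_ne_zero) z
  have dcS : DifferentiableAt ℝ (fun ζ => starRingEnd ℂ (Sfun p D w ζ)) z :=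
    (contDiff_conj.comp (contDiff_Sfun hp)).differentiable inf_ne_zero z
  rw [wdbar_const_mul (dS.fun_sub dcS), wdbar_sub dS dcS, wdbar_conj dS,
    wdbar_Sfun hp z, wd_Sfun hp ha z, map_neg, conj_wd_real hp hreal z]
  rw [show Complex.I * (Complex.I * (efun p D w z - - WDbar p z))
    = (Complex.I * Complex.I) * (efun p D w z + WDbar p z) by ring, Complex.I_mul_I]
  ring

lemma wd_Tc (hp : ContDiff ℝ ∞ p) (hreal : ∀ z, (p z).im = 0)
    (ha : ∀ z, p z = ∑ m ∈ range (D+1), ∑ n ∈ range (D+1),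
      a m n * z^m * (starRingEnd ℂ z)^n) (z : ℂ) :
    Complex.I * WD (fun ζ => ((Ttwist p D w ζ : ℝ) : ℂ)) z
      = WD p z + starRingEnd ℂ (efun p D w z) := by
  rw [Tcfun_eq]
  have dS : DifferentiableAt ℝ (Sfun p D w) z :=
    ((contDiff_Sfun hp).differentiable inf_ne_zero) z
  have dcS : DifferentiableAt ℝ (fun ζ => starRingEnd ℂ (Sfun p D w ζ)) z :=
    (contDiff_conj.comp (contDiff_Sfun hp)).differentiable inf_ne_zero z
  rw [wd_const_mul (dS.fun_sub dcS), wd_sub dS dcS, wd_conj dS,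
    wdbar_Sfun hp z, wd_Sfun hp ha z]
  rw [show Complex.I * (Complex.I * (-WD p z - starRingEnd ℂ (efun p D w z)))
    = (Complex.I * Complex.I) * (-WD p z - starRingEnd ℂ (efun p D w z)) by ring,
    Complex.I_mul_I]
  ring

end tc

section swap

lemma fpz {f : ℝ × ℂ → ℂ} {σ : ℝ} {z : ℂ} (h : DifferentiableAt ℝ f (σ, z)) (v : ℂ) :
    fderiv ℝ (fun ζ => f (σ, ζ)) z v = fderiv ℝ f (σ, z) ((0 : ℝ), v) := by
  have hmk : HasFDerivAt (fun x : ℂ => ((σ, x) : ℝ × ℂ))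
      ((0 : ℂ →L[ℝ] ℝ).prod (ContinuousLinearMap.id ℝ ℂ)) z :=
    (hasFDerivAt_const σ z).prodMk (hasFDerivAt_id z)
  have h2 : HasFDerivAt (fun ζ => f (σ, ζ))
      ((fderiv ℝ f (σ, z)).comp ((0 : ℂ →L[ℝ] ℝ).prod (ContinuousLinearMap.id ℝ ℂ))) z :=
    h.hasFDerivAt.comp z hmk
  rw [h2.fderiv]
  simp

lemma fpt {f : ℝ × ℂ → ℂ} {τ : ℝ} {ζ : ℂ} (h : DifferentiableAt ℝ f (τ, ζ)) :
    deriv (fun s => f (s, ζ)) τ = fderiv ℝ f (τ, ζ) ((1 : ℝ), (0 : ℂ)) := by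
  have hmk : HasFDerivAt (fun s : ℝ => ((s, ζ) : ℝ × ℂ))
      ((ContinuousLinearMap.id ℝ ℝ).prod (0 : ℝ →L[ℝ] ℂ)) τ :=
    (hasFDerivAt_id τ).prodMk (hasFDerivAt_const ζ τ)
  have h2 : HasFDerivAt (fun s => f (s, ζ))
      ((fderiv ℝ f (τ, ζ)).comp ((ContinuousLinearMap.id ℝ ℝ).prod (0 : ℝ →L[ℝ] ℂ))) τ :=
    h.hasFDerivAt.comp τ hmk
  rw [h2.hasDerivAt.deriv]
  simp

lemma diff_P_fst {f : ℝ × ℂ → ℂ} (hf : ContDiff ℝ ∞ f) (z : ℂ) (τ : ℝ) :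
    DifferentiableAt ℝ (fun s : ℝ => f (s, z)) τ :=
  ((hf.differentiable inf_ne_zero) (τ, z)).comp τ
    ((differentiableAt_id).prodMk (differentiableAt_const z))

lemma diff_P_snd {f : ℝ × ℂ → ℂ} (hf : ContDiff ℝ ∞ f) (τ : ℝ) (z : ℂ) :
    DifferentiableAt ℝ (fun ζ : ℂ => f (τ, ζ)) z :=
  ((hf.differentiable inf_ne_zero) (τ, z)).comp z
    ((differentiableAt_const τ).prodMk (differentiableAt_id))

lemma dpartial_tz {f : ℝ × ℂ → ℂ} (hf : ContDiff ℝ ∞ f) (τ : ℝ) (z : ℂ) (v : ℂ) :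
    deriv (fun s : ℝ => fderiv ℝ f (s, z) ((0 : ℝ), v)) τ
      = fderiv ℝ (fun ζ : ℂ => fderiv ℝ f (τ, ζ) ((1 : ℝ), (0 : ℂ))) z v := by
  have hPv : ContDiff ℝ ∞ (fun q : ℝ × ℂ => fderiv ℝ f q ((0 : ℝ), v)) :=
    contDiff_fderiv_apply hf _
  have hP0 : ContDiff ℝ ∞ (fun q : ℝ × ℂ => fderiv ℝ f q ((1 : ℝ), (0 : ℂ))) :=
    contDiff_fderiv_apply hf _
  have e1 : deriv (fun s : ℝ => fderiv ℝ f (s, z) ((0 : ℝ), v)) τ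
      = fderiv ℝ (fun q : ℝ × ℂ => fderiv ℝ f q ((0 : ℝ), v)) (τ, z) ((1 : ℝ), (0 : ℂ)) :=
    fpt ((hPv.differentiable inf_ne_zero) (τ, z))
  have e2 := fderiv_apply_comm hf (τ, z) ((0 : ℝ), v) ((1 : ℝ), (0 : ℂ))
  have e3 : fderiv ℝ (fun q : ℝ × ℂ => fderiv ℝ f q ((1 : ℝ), (0 : ℂ))) (τ, z) ((0 : ℝ), v)
      = fderiv ℝ (fun ζ : ℂ => fderiv ℝ f (τ, ζ) ((1 : ℝ), (0 : ℂ))) z v :=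
    (fpz ((hP0.differentiable inf_ne_zero) (τ, z)) v).symm
  rw [e1, e2, e3]

variable {F : ℝ → ℂ → ℂ}

lemma deriv_wdbar_swap (hG : ContDiff ℝ ∞ (fun q : ℝ × ℂ => F q.1 q.2)) (τ : ℝ) (z : ℂ) :
    deriv (fun σ => WDbar (F σ) z) τ = WDbar (fun ζ => deriv (fun σ => F σ ζ) τ) z := by
  set G : ℝ × ℂ → ℂ := fun q => F q.1 q.2 with hGdef
  have hGdiff : Differentiable ℝ G := hG.differentiable inf_ne_zero
  have h1 : (fun σ => WDbar (F σ) z) = fun σ =>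
      (fderiv ℝ G (σ, z) ((0:ℝ), (1:ℂ)) + Complex.I * fderiv ℝ G (σ, z) ((0:ℝ), Complex.I))/2 := by
    funext σ
    have a1 : fderiv ℝ (F σ) z 1 = fderiv ℝ G (σ, z) ((0:ℝ), (1:ℂ)) := fpz (hGdiff (σ, z)) 1
    have a2 : fderiv ℝ (F σ) z Complex.I = fderiv ℝ G (σ, z) ((0:ℝ), Complex.I) :=
      fpz (hGdiff (σ, z)) Complex.I
    simp only [WDbar, a1, a2]
  have h2 : (fun ζ => deriv (fun σ => F σ ζ) τ) = fun ζ => fderiv ℝ G (τ, ζ) ((1:ℝ), (0:ℂ)) := by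
    funext ζ
    exact fpt (hGdiff (τ, ζ))
  rw [h1, h2]
  have d1 : DifferentiableAt ℝ (fun s : ℝ => fderiv ℝ G (s, z) ((0:ℝ), (1:ℂ))) τ :=
    diff_P_fst (contDiff_fderiv_apply hG _) z τ
  have dI : DifferentiableAt ℝ (fun s : ℝ => fderiv ℝ G (s, z) ((0:ℝ), Complex.I)) τ :=
    diff_P_fst (contDiff_fderiv_apply hG _) z τ
  show _ = (fderiv ℝ (fun ζ => fderiv ℝ G (τ, ζ) ((1:ℝ), (0:ℂ))) z 1
      + Complex.I * fderiv ℝ (fun ζ => fderiv ℝ G (τ, ζ) ((1:ℝ), (0:ℂ))) z Complex.I) / 2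
  rw [← dpartial_tz hG τ z 1, ← dpartial_tz hG τ z Complex.I]
  rw [deriv_div_const, deriv_fun_add d1 (dI.const_mul _), deriv_const_mul _ dI]

lemma deriv_wd_swap (hG : ContDiff ℝ ∞ (fun q : ℝ × ℂ => F q.1 q.2)) (τ : ℝ) (z : ℂ) :
    deriv (fun σ => WD (F σ) z) τ = WD (fun ζ => deriv (fun σ => F σ ζ) τ) z := by
  set G : ℝ × ℂ → ℂ := fun q => F q.1 q.2 with hGdef
  have hGdiff : Differentiable ℝ G := hG.differentiable inf_ne_zero
  have h1 : (fun σ => WD (F σ) z) = fun σ =>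
      (fderiv ℝ G (σ, z) ((0:ℝ), (1:ℂ)) - Complex.I * fderiv ℝ G (σ, z) ((0:ℝ), Complex.I))/2 := by
    funext σ
    have a1 : fderiv ℝ (F σ) z 1 = fderiv ℝ G (σ, z) ((0:ℝ), (1:ℂ)) := fpz (hGdiff (σ, z)) 1
    have a2 : fderiv ℝ (F σ) z Complex.I = fderiv ℝ G (σ, z) ((0:ℝ), Complex.I) :=
      fpz (hGdiff (σ, z)) Complex.I
    simp only [WD, a1, a2]
  have h2 : (fun ζ => deriv (fun σ => F σ ζ) τ) = fun ζ => fderiv ℝ G (τ, ζ) ((1:ℝ), (0:ℂ)) := by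
    funext ζ
    exact fpt (hGdiff (τ, ζ))
  rw [h1, h2]
  have d1 : DifferentiableAt ℝ (fun s : ℝ => fderiv ℝ G (s, z) ((0:ℝ), (1:ℂ))) τ :=
    diff_P_fst (contDiff_fderiv_apply hG _) z τ
  have dI : DifferentiableAt ℝ (fun s : ℝ => fderiv ℝ G (s, z) ((0:ℝ), Complex.I)) τ :=
    diff_P_fst (contDiff_fderiv_apply hG _) z τ
  show _ = (fderiv ℝ (fun ζ => fderiv ℝ G (τ, ζ) ((1:ℝ), (0:ℂ))) z 1
      - Complex.I * fderiv ℝ (fun ζ => fderiv ℝ G (τ, ζ) ((1:ℝ), (0:ℂ))) z Complex.I) / 2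
  rw [← dpartial_tz hG τ z 1, ← dpartial_tz hG τ z Complex.I]
  rw [deriv_div_const, deriv_fun_sub d1 (dI.const_mul _), deriv_const_mul _ dI]

end swap

section swap2

variable {F : ℝ → ℂ → ℂ}

lemma diff_wdbar_tau (hG : ContDiff ℝ ∞ (fun q : ℝ × ℂ => F q.1 q.2)) (τ : ℝ) (z : ℂ) :
    DifferentiableAt ℝ (fun σ => WDbar (F σ) z) τ := by
  set G : ℝ × ℂ → ℂ := fun q => F q.1 q.2 with hGdef
  have hGdiff : Differentiable ℝ G := hG.differentiable inf_ne_zero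
  have h1 : (fun σ => WDbar (F σ) z) = fun σ =>
      (fderiv ℝ G (σ, z) ((0:ℝ), (1:ℂ)) + Complex.I * fderiv ℝ G (σ, z) ((0:ℝ), Complex.I))/2 := by
    funext σ
    have a1 : fderiv ℝ (F σ) z 1 = fderiv ℝ G (σ, z) ((0:ℝ), (1:ℂ)) := fpz (hGdiff (σ, z)) 1
    have a2 : fderiv ℝ (F σ) z Complex.I = fderiv ℝ G (σ, z) ((0:ℝ), Complex.I) :=
      fpz (hGdiff (σ, z)) Complex.I
    simp only [WDbar, a1, a2]
  rw [h1]
  exact ((diff_P_fst (contDiff_fderiv_apply hG _) z τ).add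
    ((diff_P_fst (contDiff_fderiv_apply hG _) z τ).const_mul _)).div_const _

lemma diff_wd_tau (hG : ContDiff ℝ ∞ (fun q : ℝ × ℂ => F q.1 q.2)) (τ : ℝ) (z : ℂ) :
    DifferentiableAt ℝ (fun σ => WD (F σ) z) τ := by
  set G : ℝ × ℂ → ℂ := fun q => F q.1 q.2 with hGdef
  have hGdiff : Differentiable ℝ G := hG.differentiable inf_ne_zero
  have h1 : (fun σ => WD (F σ) z) = fun σ =>
      (fderiv ℝ G (σ, z) ((0:ℝ), (1:ℂ)) - Complex.I * fderiv ℝ G (σ, z) ((0:ℝ), Complex.I))/2 := by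
    funext σ
    have a1 : fderiv ℝ (F σ) z 1 = fderiv ℝ G (σ, z) ((0:ℝ), (1:ℂ)) := fpz (hGdiff (σ, z)) 1
    have a2 : fderiv ℝ (F σ) z Complex.I = fderiv ℝ G (σ, z) ((0:ℝ), Complex.I) :=
      fpz (hGdiff (σ, z)) Complex.I
    simp only [WD, a1, a2]
  rw [h1]
  exact ((diff_P_fst (contDiff_fderiv_apply hG _) z τ).sub
    ((diff_P_fst (contDiff_fderiv_apply hG _) z τ).const_mul _)).div_const _

lemma diff_derivtau_z (hG : ContDiff ℝ ∞ (fun q : ℝ × ℂ => F q.1 q.2)) (τ : ℝ) (z : ℂ) :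
    DifferentiableAt ℝ (fun ζ => deriv (fun σ => F σ ζ) τ) z := by
  set G : ℝ × ℂ → ℂ := fun q => F q.1 q.2 with hGdef
  have hGdiff : Differentiable ℝ G := hG.differentiable inf_ne_zero
  have h2 : (fun ζ => deriv (fun σ => F σ ζ) τ) = fun ζ => fderiv ℝ G (τ, ζ) ((1:ℝ), (0:ℂ)) := by
    funext ζ
    exact fpt (hGdiff (τ, ζ))
  rw [h2]
  exact diff_P_snd (contDiff_fderiv_apply hG _) τ z

lemma deriv_coe_mul (c : ℂ) (τ : ℝ) (z : ℂ)
    (hG : ContDiff ℝ ∞ (fun q : ℝ × ℂ => F q.1 q.2)) :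
    deriv (fun σ : ℝ => (σ : ℂ) * c * F σ z) τ
      = c * F τ z + (τ : ℂ) * c * deriv (fun σ => F σ z) τ := by
  have hdFt : DifferentiableAt ℝ (fun σ => F σ z) τ := diff_P_fst hG z τ
  have hor : HasDerivAt (fun σ : ℝ => (σ : ℂ)) (((1:ℝ):ℂ)) τ := Complex.ofRealCLM.hasDerivAt
  have h := ((hor.mul_const c).fun_mul hdFt.hasDerivAt).deriv
  rw [h]
  push_cast
  ring

lemma diff_coe_mul (c : ℂ) (τ : ℝ) (z : ℂ)
    (hG : ContDiff ℝ ∞ (fun q : ℝ × ℂ => F q.1 q.2)) :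
    DifferentiableAt ℝ (fun σ : ℝ => (σ : ℂ) * c * F σ z) τ := by
  have hdFt : DifferentiableAt ℝ (fun σ => F σ z) τ := diff_P_fst hG z τ
  have hor : HasDerivAt (fun σ : ℝ => (σ : ℂ)) (((1:ℝ):ℂ)) τ := Complex.ofRealCLM.hasDerivAt
  exact ((hor.mul_const c).fun_mul hdFt.hasDerivAt).differentiableAt

end swap2

/-- Commutators of the twisted `τ`-derivative with the weighted derivatives:
`[M_{τp}, Z̄_{τp,z}] = -e(w,z)` and `[M_{τp}, Z_{τp,z}] = conj(e(w,z))`, as operators on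
smooth functions of `(τ, z)` with parameter `w`. -/
theorem M_Z_commutators (p : ℂ → ℂ) (D : ℕ)
    (hpoly : IsCCPoly p D) (hreal : IsRealValued p) (w : ℂ)
    (F : ℝ → ℂ → ℂ) (hF : ContDiff ℝ (⊤ : ℕ∞) (fun q : ℝ × ℂ => F q.1 q.2))
    (τ : ℝ) (z : ℂ) :
    (Mop p D w (fun σ ζ => Zbarop p σ (F σ) ζ) τ z -
        Zbarop p τ (Mop p D w F τ) z = -(efun p D w z) * F τ z) ∧
    (Mop p D w (fun σ ζ => Zop p σ (F σ) ζ) τ z -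
        Zop p τ (Mop p D w F τ) z = starRingEnd ℂ (efun p D w z) * F τ z) := by
  obtain ⟨a, ha⟩ := hpoly
  have hp : ContDiff ℝ ∞ p := contDiff_of_poly ha
  have hG : ContDiff ℝ ∞ (fun q : ℝ × ℂ => F q.1 q.2) := hF.of_le (by simp)
  have hrealv : ∀ x, (p x).im = 0 := hreal
  have hdFz : DifferentiableAt ℝ (F τ) z := diff_P_snd hG τ z
  have hdTc : DifferentiableAt ℝ (fun ζ => ((Ttwist p D w ζ : ℝ) : ℂ)) z :=
    ((contDiff_Tc hp).differentiable inf_ne_zero) z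
  have hdP0 : DifferentiableAt ℝ (fun ζ => deriv (fun σ => F σ ζ) τ) z :=
    diff_derivtau_z hG τ z
  constructor
  · -- Zbar commutator
    have hI := wdbar_Tc (w := w) hp hrealv ha z
    simp only [Mop, Zbarop]
    have hM : Mop p D w F τ = fun ζ => deriv (fun σ => F σ ζ) τ
        - Complex.I * ((Ttwist p D w ζ : ℝ) : ℂ) * F τ ζ := rfl
    rw [hM]
    have hd1 : deriv (fun σ => WDbar (F σ) z + (σ:ℂ) * WDbar p z * F σ z) τ
        = WDbar (fun ζ => deriv (fun σ => F σ ζ) τ) z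
          + (WDbar p z * F τ z + (τ:ℂ) * WDbar p z * deriv (fun σ => F σ z) τ) := by
      rw [deriv_fun_add (diff_wdbar_tau hG τ z) (diff_coe_mul (WDbar p z) τ z hG),
        deriv_wdbar_swap hG τ z, deriv_coe_mul (WDbar p z) τ z hG]
    have hd2 : WDbar (fun ζ => deriv (fun σ => F σ ζ) τ
          - Complex.I * ((Ttwist p D w ζ : ℝ) : ℂ) * F τ ζ) z
        = WDbar (fun ζ => deriv (fun σ => F σ ζ) τ) z
          - Complex.I * (WDbar (fun ζ => ((Ttwist p D w ζ : ℝ) : ℂ)) z * F τ z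
            + ((Ttwist p D w z : ℝ) : ℂ) * WDbar (F τ) z) := by
      have hre : (fun ζ => deriv (fun σ => F σ ζ) τ
            - Complex.I * ((Ttwist p D w ζ : ℝ) : ℂ) * F τ ζ)
          = fun ζ => deriv (fun σ => F σ ζ) τ
            - Complex.I * (((Ttwist p D w ζ : ℝ) : ℂ) * F τ ζ) := by
        funext ζ; ring
      rw [hre, wdbar_sub hdP0 ((hdTc.fun_mul hdFz).const_mul _),
        wdbar_const_mul (hdTc.fun_mul hdFz), wdbar_mul hdTc hdFz]
    rw [hd1, hd2]
    linear_combination (F τ z) * hI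
  · -- Z commutator
    have hI := wd_Tc (w := w) hp hrealv ha z
    simp only [Mop, Zop]
    have hM : Mop p D w F τ = fun ζ => deriv (fun σ => F σ ζ) τ
        - Complex.I * ((Ttwist p D w ζ : ℝ) : ℂ) * F τ ζ := rfl
    rw [hM]
    have hd1 : deriv (fun σ => WD (F σ) z - (σ:ℂ) * WD p z * F σ z) τ
        = WD (fun ζ => deriv (fun σ => F σ ζ) τ) z
          - (WD p z * F τ z + (τ:ℂ) * WD p z * deriv (fun σ => F σ z) τ) := by
      rw [deriv_fun_sub (diff_wd_tau hG τ z) (diff_coe_mul (WD p z) τ z hG),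
        deriv_wd_swap hG τ z, deriv_coe_mul (WD p z) τ z hG]
    have hd2 : WD (fun ζ => deriv (fun σ => F σ ζ) τ
          - Complex.I * ((Ttwist p D w ζ : ℝ) : ℂ) * F τ ζ) z
        = WD (fun ζ => deriv (fun σ => F σ ζ) τ) z
          - Complex.I * (WD (fun ζ => ((Ttwist p D w ζ : ℝ) : ℂ)) z * F τ z
            + ((Ttwist p D w z : ℝ) : ℂ) * WD (F τ) z) := by
      have hre : (fun ζ => deriv (fun σ => F σ ζ) τ
            - Complex.I * ((Ttwist p D w ζ : ℝ) : ℂ) * F τ ζ)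
          = fun ζ => deriv (fun σ => F σ ζ) τ
            - Complex.I * (((Ttwist p D w ζ : ℝ) : ℂ) * F τ ζ) := by
        funext ζ; ring
      rw [hre, wd_sub hdP0 ((hdTc.fun_mul hdFz).const_mul _),
        wd_const_mul (hdTc.fun_mul hdFz), wd_mul hdTc hdFz]
    rw [hd1, hd2]
    linear_combination (F τ z) * hI
end

section
/- With notation as above ($\Box_{\tau p,\xi}$, $M_{\tau p} = \partial_\tau - iT(w,\xi)$, $e(w,\xi)$): $[\Box_{\tau p, \xi}, M_{\tau p}] = -\frac{\partial^2 p}{\partial \xi \partial \bar\xi} - e(w,\xi) Z_{\tau p, \xi} + \overline{e(w,\xi)} \bar Z_{\tau p, \xi}$ as operators on smooth functions of $(\tau, \xi)$. -/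
open Finset

namespace Waux
open Complex


open Complex

variable {f g : ℂ → ℂ} {z : ℂ}

lemma WDbar_add (hf : DifferentiableAt ℝ f z) (hg : DifferentiableAt ℝ g z) :
    WDbar (fun z => f z + g z) z = WDbar f z + WDbar g z := by
  simp only [WDbar, fderiv_fun_add hf hg, ContinuousLinearMap.add_apply]; ring

lemma WD_sub (hf : DifferentiableAt ℝ f z) (hg : DifferentiableAt ℝ g z) :
    WD (fun z => f z - g z) z = WD f z - WD g z := by
  simp only [WD, fderiv_fun_sub hf hg, ContinuousLinearMap.sub_apply]; ring

lemma WDbar_sub (hf : DifferentiableAt ℝ f z) (hg : DifferentiableAt ℝ g z) :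
    WDbar (fun z => f z - g z) z = WDbar f z - WDbar g z := by
  simp only [WDbar, fderiv_fun_sub hf hg, ContinuousLinearMap.sub_apply]; ring

lemma WD_const (c : ℂ) : WD (fun _ => c) z = 0 := by
  simp [WD]

lemma WDbar_const (c : ℂ) : WDbar (fun _ => c) z = 0 := by
  simp [WDbar]

lemma WD_mul (hf : DifferentiableAt ℝ f z) (hg : DifferentiableAt ℝ g z) :
    WD (fun z => f z * g z) z = WD f z * g z + f z * WD g z := by
  simp only [WD, fderiv_fun_mul hf hg, ContinuousLinearMap.add_apply,
    ContinuousLinearMap.smul_apply, smul_eq_mul]; ring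

lemma WDbar_mul (hf : DifferentiableAt ℝ f z) (hg : DifferentiableAt ℝ g z) :
    WDbar (fun z => f z * g z) z = WDbar f z * g z + f z * WDbar g z := by
  simp only [WDbar, fderiv_fun_mul hf hg, ContinuousLinearMap.add_apply,
    ContinuousLinearMap.smul_apply, smul_eq_mul]; ring

lemma WD_const_mul (c : ℂ) (hf : DifferentiableAt ℝ f z) :
    WD (fun z => c * f z) z = c * WD f z := by
  rw [WD_mul (differentiableAt_const c) hf, WD_const]; ring

lemma WDbar_const_mul (c : ℂ) (hf : DifferentiableAt ℝ f z) :
    WDbar (fun z => c * f z) z = c * WDbar f z := by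
  rw [WDbar_mul (differentiableAt_const c) hf, WDbar_const]; ring

lemma WDbar_neg (hf : DifferentiableAt ℝ f z) :
    WDbar (fun z => -(f z)) z = -(WDbar f z) := by
  have h : (fun z => -(f z)) = fun z => (-1 : ℂ) * f z := by funext z; ring
  rw [h, WDbar_const_mul (-1 : ℂ) hf]; ring

lemma WD_sum {ι : Type*} (s : Finset ι) (f : ι → ℂ → ℂ)
    (h : ∀ i ∈ s, DifferentiableAt ℝ (f i) z) :
    WD (fun z => ∑ i ∈ s, f i z) z = ∑ i ∈ s, WD (f i) z := by
  simp only [WD, fderiv_fun_sum h, ContinuousLinearMap.sum_apply, Finset.mul_sum,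
    ← Finset.sum_sub_distrib, Finset.sum_div]

lemma WDbar_sum {ι : Type*} (s : Finset ι) (f : ι → ℂ → ℂ)
    (h : ∀ i ∈ s, DifferentiableAt ℝ (f i) z) :
    WDbar (fun z => ∑ i ∈ s, f i z) z = ∑ i ∈ s, WDbar (f i) z := by
  simp only [WDbar, fderiv_fun_sum h, ContinuousLinearMap.sum_apply, Finset.mul_sum,
    ← Finset.sum_add_distrib, Finset.sum_div]

lemma WD_id : WD (fun z : ℂ => z) z = 1 := by
  simp [WD, Complex.I_mul_I]

lemma WDbar_id : WDbar (fun z : ℂ => z) z = 0 := by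
  simp [WDbar, Complex.I_mul_I]

lemma diff_conj : DifferentiableAt ℝ (fun z : ℂ => (starRingEnd ℂ) z) z :=
  Complex.conjCLE.differentiableAt

lemma fderiv_conj_comp (hf : DifferentiableAt ℝ f z) (v : ℂ) :
    fderiv ℝ (fun z => (starRingEnd ℂ) (f z)) z v = (starRingEnd ℂ) (fderiv ℝ f z v) := by
  have h : (fun z => (starRingEnd ℂ) (f z)) = (⇑Complex.conjCLE) ∘ f := by
    funext z; simp
  rw [h, fderiv_comp z Complex.conjCLE.differentiableAt hf, ContinuousLinearEquiv.fderiv]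
  simp

lemma WD_conj_comp (hf : DifferentiableAt ℝ f z) :
    WD (fun z => (starRingEnd ℂ) (f z)) z = (starRingEnd ℂ) (WDbar f z) := by
  simp only [WD, WDbar, fderiv_conj_comp hf, map_div₀, map_add, map_mul, map_sub, Complex.conj_I, map_ofNat]
  ring

lemma WDbar_conj_comp (hf : DifferentiableAt ℝ f z) :
    WDbar (fun z => (starRingEnd ℂ) (f z)) z = (starRingEnd ℂ) (WD f z) := by
  simp only [WD, WDbar, fderiv_conj_comp hf, map_div₀, map_add, map_mul, map_sub, Complex.conj_I, map_ofNat]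
  ring

lemma WD_conj : WD (fun z : ℂ => (starRingEnd ℂ) z) z = 0 := by
  have h1 := fderiv_conj_comp (f := fun z : ℂ => z) (z := z) differentiableAt_fun_id 1
  have hI := fderiv_conj_comp (f := fun z : ℂ => z) (z := z) differentiableAt_fun_id Complex.I
  simp only [WD]
  rw [h1, hI]
  simp [Complex.conj_I, Complex.I_mul_I]

lemma WDbar_conj : WDbar (fun z : ℂ => (starRingEnd ℂ) z) z = 1 := by
  have h1 := fderiv_conj_comp (f := fun z : ℂ => z) (z := z) differentiableAt_fun_id 1
  have hI := fderiv_conj_comp (f := fun z : ℂ => z) (z := z) differentiableAt_fun_id Complex.I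
  simp only [WDbar]
  rw [h1, hI]
  simp [Complex.conj_I, Complex.I_mul_I]

lemma WD_pow (hf : DifferentiableAt ℝ f z) (n : ℕ) :
    WD (fun z => f z ^ n) z = (n : ℂ) * f z ^ (n - 1) * WD f z := by
  induction n with
  | zero => simp [WD_const]
  | succ m ih =>
    have : (fun z => f z ^ (m + 1)) = fun z => f z ^ m * f z := by
      funext z; rw [pow_succ]
    rw [this, WD_mul (hf.fun_pow m) hf, ih]
    rcases Nat.eq_zero_or_pos m with hm | hm
    · subst hm; simp
    · have h2 : f z ^ (m - 1) * f z = f z ^ m := by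
        conv_rhs => rw [← Nat.sub_add_cancel hm]
        rw [pow_succ]
      simp only [Nat.add_sub_cancel]
      push_cast
      calc ↑m * f z ^ (m - 1) * WD f z * f z + f z ^ m * WD f z
          = ↑m * (f z ^ (m - 1) * f z) * WD f z + f z ^ m * WD f z := by ring
        _ = (↑m + 1) * f z ^ m * WD f z := by rw [h2]; ring

lemma WDbar_pow (hf : DifferentiableAt ℝ f z) (n : ℕ) :
    WDbar (fun z => f z ^ n) z = (n : ℂ) * f z ^ (n - 1) * WDbar f z := by
  induction n with
  | zero => simp [WDbar_const]
  | succ m ih =>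
    have : (fun z => f z ^ (m + 1)) = fun z => f z ^ m * f z := by
      funext z; rw [pow_succ]
    rw [this, WDbar_mul (hf.fun_pow m) hf, ih]
    rcases Nat.eq_zero_or_pos m with hm | hm
    · subst hm; simp
    · have h2 : f z ^ (m - 1) * f z = f z ^ m := by
        conv_rhs => rw [← Nat.sub_add_cancel hm]
        rw [pow_succ]
      simp only [Nat.add_sub_cancel]
      push_cast
      calc ↑m * f z ^ (m - 1) * WDbar f z * f z + f z ^ m * WDbar f z
          = ↑m * (f z ^ (m - 1) * f z) * WDbar f z + f z ^ m * WDbar f z := by ring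
        _ = (↑m + 1) * f z ^ m * WDbar f z := by rw [h2]; ring

lemma contDiff_WD (hf : ContDiff ℝ (⊤ : ℕ∞) f) : ContDiff ℝ (⊤ : ℕ∞) (WD f) := by
  have h1 : ContDiff ℝ (⊤ : ℕ∞) (fun z => fderiv ℝ f z 1) :=
    (hf.fderiv_right (by simp)).clm_apply contDiff_const
  have h2 : ContDiff ℝ (⊤ : ℕ∞) (fun z => fderiv ℝ f z Complex.I) :=
    (hf.fderiv_right (by simp)).clm_apply contDiff_const
  exact (h1.sub (contDiff_const.mul h2)).div_const 2

lemma contDiff_WDbar (hf : ContDiff ℝ (⊤ : ℕ∞) f) : ContDiff ℝ (⊤ : ℕ∞) (WDbar f) := by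
  have h1 : ContDiff ℝ (⊤ : ℕ∞) (fun z => fderiv ℝ f z 1) :=
    (hf.fderiv_right (by simp)).clm_apply contDiff_const
  have h2 : ContDiff ℝ (⊤ : ℕ∞) (fun z => fderiv ℝ f z Complex.I) :=
    (hf.fderiv_right (by simp)).clm_apply contDiff_const
  exact (h1.add (contDiff_const.mul h2)).div_const 2


variable {f g : ℂ → ℂ} {z : ℂ}

-- Clairaut
lemma wd_wdbar_comm (hf : ContDiff ℝ (⊤ : ℕ∞) f) (z : ℂ) : WD (WDbar f) z = WDbar (WD f) z := by
  have hfd : ContDiff ℝ (⊤ : ℕ∞) (fderiv ℝ f) := hf.fderiv_right (by simp)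
  have hfd' : ∀ y, DifferentiableAt ℝ (fderiv ℝ f) y := fun y => (hfd.differentiable (by simp)) y
  have hsym : ∀ u v : ℂ, fderiv ℝ (fderiv ℝ f) z u v = fderiv ℝ (fderiv ℝ f) z v u := by
    intro u v
    exact (hf.contDiffAt.isSymmSndFDerivAt (by simp [minSmoothness_of_isRCLikeNormedField]; exact WithTop.coe_le_coe.mpr le_top)).eq u v
  have key : ∀ (v u : ℂ) (y : ℂ), fderiv ℝ (fun z => fderiv ℝ f z v) y u
      = fderiv ℝ (fderiv ℝ f) y u v := by
    intro v u y
    rw [fderiv_clm_apply (hfd' y) (differentiableAt_const v)]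
    simp
  have hdv : ∀ (v : ℂ) (y : ℂ), DifferentiableAt ℝ (fun z => fderiv ℝ f z v) y := by
    intro v y
    exact ((hfd.clm_apply contDiff_const).differentiable (by simp)) y
  have e1 : ∀ y v, fderiv ℝ (WDbar f) y v =
      (fderiv ℝ (fderiv ℝ f) y v 1 + Complex.I * fderiv ℝ (fderiv ℝ f) y v Complex.I) / 2 := by
    intro y v
    have : WDbar f = fun z => (fderiv ℝ f z 1 + Complex.I * fderiv ℝ f z Complex.I) / 2 := rfl
    rw [this]
    simp only [div_eq_inv_mul]
    rw [fderiv_const_mul ((hdv 1 y).fun_add ((hdv Complex.I y).const_mul _)),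
      fderiv_fun_add (hdv 1 y) ((hdv Complex.I y).const_mul _),
      fderiv_const_mul (hdv Complex.I y)]
    simp only [ContinuousLinearMap.coe_smul', Pi.smul_apply, ContinuousLinearMap.add_apply,
      smul_eq_mul]
    rw [key, key]
  have e2 : ∀ y v, fderiv ℝ (WD f) y v =
      (fderiv ℝ (fderiv ℝ f) y v 1 - Complex.I * fderiv ℝ (fderiv ℝ f) y v Complex.I) / 2 := by
    intro y v
    have : WD f = fun z => (fderiv ℝ f z 1 - Complex.I * fderiv ℝ f z Complex.I) / 2 := rfl
    rw [this]
    simp only [div_eq_inv_mul]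
    rw [fderiv_const_mul ((hdv 1 y).fun_sub ((hdv Complex.I y).const_mul _)),
      fderiv_fun_sub (hdv 1 y) ((hdv Complex.I y).const_mul _),
      fderiv_const_mul (hdv Complex.I y)]
    simp only [ContinuousLinearMap.coe_smul', Pi.smul_apply, ContinuousLinearMap.sub_apply,
      smul_eq_mul]
    rw [key, key]
  show (fderiv ℝ (WDbar f) z 1 - Complex.I * fderiv ℝ (WDbar f) z Complex.I) / 2
      = (fderiv ℝ (WD f) z 1 + Complex.I * fderiv ℝ (WD f) z Complex.I) / 2
  rw [e1, e1, e2, e2, hsym Complex.I 1]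
  ring



variable {H : ℝ × ℂ → ℂ} {τ : ℝ} {ξ : ℂ}

lemma hasDerivAt_slice_left (hH : DifferentiableAt ℝ H (τ, ξ)) :
    HasDerivAt (fun σ => H (σ, ξ)) (fderiv ℝ H (τ, ξ) (1, 0)) τ := by
  have h := hH.hasFDerivAt.comp τ (hasFDerivAt_prodMk_left (𝕜 := ℝ) τ ξ)
  simpa [Function.comp_def] using h.hasDerivAt

lemma deriv_slice_left (hH : DifferentiableAt ℝ H (τ, ξ)) :
    deriv (fun σ => H (σ, ξ)) τ = fderiv ℝ H (τ, ξ) (1, 0) :=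
  (hasDerivAt_slice_left hH).deriv

lemma diff_slice_left (hH : DifferentiableAt ℝ H (τ, ξ)) :
    DifferentiableAt ℝ (fun σ => H (σ, ξ)) τ :=
  (hasDerivAt_slice_left hH).differentiableAt

lemma fderiv_slice_right (hH : DifferentiableAt ℝ H (τ, ξ)) (v : ℂ) :
    fderiv ℝ (fun z => H (τ, z)) ξ v = fderiv ℝ H (τ, ξ) (0, v) := by
  have h := (hH.hasFDerivAt.comp ξ (hasFDerivAt_prodMk_right (𝕜 := ℝ) τ ξ)).fderiv
  rw [show (fun z => H (τ, z)) = H ∘ Prod.mk τ from rfl, h]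
  simp

lemma diff_slice_right (hH : DifferentiableAt ℝ H (τ, ξ)) :
    DifferentiableAt ℝ (fun z => H (τ, z)) ξ :=
  (hH.hasFDerivAt.comp ξ (hasFDerivAt_prodMk_right (𝕜 := ℝ) τ ξ)).differentiableAt

lemma WD_slice (hH : DifferentiableAt ℝ H (τ, ξ)) :
    WD (fun z => H (τ, z)) ξ
      = (fderiv ℝ H (τ, ξ) (0, 1) - Complex.I * fderiv ℝ H (τ, ξ) (0, Complex.I)) / 2 := by
  show (fderiv ℝ (fun z => H (τ, z)) ξ 1 - Complex.I * fderiv ℝ (fun z => H (τ, z)) ξ Complex.I) / 2 = _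
  rw [fderiv_slice_right hH, fderiv_slice_right hH]

lemma WDbar_slice (hH : DifferentiableAt ℝ H (τ, ξ)) :
    WDbar (fun z => H (τ, z)) ξ
      = (fderiv ℝ H (τ, ξ) (0, 1) + Complex.I * fderiv ℝ H (τ, ξ) (0, Complex.I)) / 2 := by
  show (fderiv ℝ (fun z => H (τ, z)) ξ 1 + Complex.I * fderiv ℝ (fun z => H (τ, z)) ξ Complex.I) / 2 = _
  rw [fderiv_slice_right hH, fderiv_slice_right hH]

lemma smooth_slice_right (hH : ContDiff ℝ (⊤ : ℕ∞) H) (τ : ℝ) : ContDiff ℝ (⊤ : ℕ∞) (fun z => H (τ, z)) :=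
  hH.comp (contDiff_const.prodMk contDiff_id)

lemma smooth_fderiv_apply (hH : ContDiff ℝ (⊤ : ℕ∞) H) (v : ℝ × ℂ) :
    ContDiff ℝ (⊤ : ℕ∞) (fun q => fderiv ℝ H q v) :=
  (hH.fderiv_right (by simp)).clm_apply contDiff_const

lemma smooth_sliceWD (hH : ContDiff ℝ (⊤ : ℕ∞) H) :
    ContDiff ℝ (⊤ : ℕ∞) (fun q : ℝ × ℂ => WD (fun z => H (q.1, z)) q.2) := by
  have he : (fun q : ℝ × ℂ => WD (fun z => H (q.1, z)) q.2)
      = fun q => (fderiv ℝ H q (0, 1) - Complex.I * fderiv ℝ H q (0, Complex.I)) / 2 := by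
    funext q
    have h : WD (fun z => H (q.1, z)) q.2
        = (fderiv ℝ H (q.1, q.2) (0, 1) - Complex.I * fderiv ℝ H (q.1, q.2) (0, Complex.I)) / 2 :=
      WD_slice ((hH.differentiable (by simp)) _)
    simpa using h
  rw [he]
  exact ((smooth_fderiv_apply hH _).sub (contDiff_const.mul (smooth_fderiv_apply hH _))).div_const 2

lemma smooth_sliceWDbar (hH : ContDiff ℝ (⊤ : ℕ∞) H) :
    ContDiff ℝ (⊤ : ℕ∞) (fun q : ℝ × ℂ => WDbar (fun z => H (q.1, z)) q.2) := by
  have he : (fun q : ℝ × ℂ => WDbar (fun z => H (q.1, z)) q.2)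
      = fun q => (fderiv ℝ H q (0, 1) + Complex.I * fderiv ℝ H q (0, Complex.I)) / 2 := by
    funext q
    have h : WDbar (fun z => H (q.1, z)) q.2
        = (fderiv ℝ H (q.1, q.2) (0, 1) + Complex.I * fderiv ℝ H (q.1, q.2) (0, Complex.I)) / 2 :=
      WDbar_slice ((hH.differentiable (by simp)) _)
    simpa using h
  rw [he]
  exact ((smooth_fderiv_apply hH _).add (contDiff_const.mul (smooth_fderiv_apply hH _))).div_const 2

lemma smooth_slice_deriv (hH : ContDiff ℝ (⊤ : ℕ∞) H) :
    ContDiff ℝ (⊤ : ℕ∞) (fun q : ℝ × ℂ => deriv (fun σ => H (σ, q.2)) q.1) := by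
  have he : (fun q : ℝ × ℂ => deriv (fun σ => H (σ, q.2)) q.1)
      = fun q => fderiv ℝ H q (1, 0) := by
    funext q
    have h : deriv (fun σ => H (σ, q.2)) q.1 = fderiv ℝ H (q.1, q.2) (1, 0) :=
      deriv_slice_left ((hH.differentiable (by simp)) _)
    simpa using h
  rw [he]
  exact smooth_fderiv_apply hH _

lemma key_fderiv_apply (hH : ContDiff ℝ (⊤ : ℕ∞) H) (v u : ℝ × ℂ) (q : ℝ × ℂ) :
    fderiv ℝ (fun q => fderiv ℝ H q v) q u = fderiv ℝ (fderiv ℝ H) q u v := by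
  rw [fderiv_clm_apply (((hH.fderiv_right (m := (⊤ : ℕ∞)) (by simp)).differentiable (by simp)) _)
    (differentiableAt_const v)]
  simp

lemma swap_WD (hH : ContDiff ℝ (⊤ : ℕ∞) H) (τ : ℝ) (ξ : ℂ) :
    WD (fun z => deriv (fun σ => H (σ, z)) τ) ξ
      = deriv (fun σ => WD (fun z => H (σ, z)) ξ) τ := by
  have hda : ∀ q, DifferentiableAt ℝ H q := fun q => (hH.differentiable (by simp)) q
  set K := fderiv ℝ (fderiv ℝ H) (τ, ξ) with hK
  have hsym : ∀ u v, K u v = K v u := fun u v =>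
    (hH.contDiffAt.isSymmSndFDerivAt (by simp [minSmoothness_of_isRCLikeNormedField]; exact WithTop.coe_le_coe.mpr le_top)).eq u v
  have hΦd : ∀ (v : ℝ × ℂ) (q : ℝ × ℂ), DifferentiableAt ℝ (fun q => fderiv ℝ H q v) q :=
    fun v q => ((smooth_fderiv_apply hH v).differentiable (by simp)) q
  -- LHS
  have hL1 : (fun z => deriv (fun σ => H (σ, z)) τ) = fun z => fderiv ℝ H (τ, z) (1, 0) :=
    funext fun z => deriv_slice_left (hda _)
  have hL2 : WD (fun z => fderiv ℝ H (τ, z) (1, 0)) ξ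
      = (fderiv ℝ (fun q => fderiv ℝ H q (1, 0)) (τ, ξ) (0, 1)
        - Complex.I * fderiv ℝ (fun q => fderiv ℝ H q (1, 0)) (τ, ξ) (0, Complex.I)) / 2 :=
    WD_slice (H := fun q => fderiv ℝ H q (1, 0)) (hΦd _ _)
  rw [hL1, hL2, key_fderiv_apply hH, key_fderiv_apply hH]
  -- RHS
  have hR1 : (fun σ => WD (fun z => H (σ, z)) ξ) = fun σ =>
      (fderiv ℝ H (σ, ξ) (0, 1) - Complex.I * fderiv ℝ H (σ, ξ) (0, Complex.I)) / 2 :=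
    funext fun σ => WD_slice (hda _)
  rw [hR1]
  have h1 : HasDerivAt (fun σ => fderiv ℝ H (σ, ξ) (0, 1)) (K (1, 0) (0, 1)) τ := by
    have h := hasDerivAt_slice_left (H := fun q => fderiv ℝ H q (0, 1)) (τ := τ) (ξ := ξ) (hΦd _ _)
    rwa [key_fderiv_apply hH] at h
  have hI : HasDerivAt (fun σ => fderiv ℝ H (σ, ξ) (0, Complex.I)) (K (1, 0) (0, Complex.I)) τ := by
    have h := hasDerivAt_slice_left (H := fun q => fderiv ℝ H q (0, Complex.I)) (τ := τ) (ξ := ξ) (hΦd _ _)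
    rwa [key_fderiv_apply hH] at h
  rw [((h1.fun_sub (hI.const_mul Complex.I)).div_const 2).deriv]
  rw [hsym (0, 1) (1, 0), hsym (0, Complex.I) (1, 0)]

lemma swap_WDbar (hH : ContDiff ℝ (⊤ : ℕ∞) H) (τ : ℝ) (ξ : ℂ) :
    WDbar (fun z => deriv (fun σ => H (σ, z)) τ) ξ
      = deriv (fun σ => WDbar (fun z => H (σ, z)) ξ) τ := by
  have hda : ∀ q, DifferentiableAt ℝ H q := fun q => (hH.differentiable (by simp)) q
  set K := fderiv ℝ (fderiv ℝ H) (τ, ξ) with hK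
  have hsym : ∀ u v, K u v = K v u := fun u v =>
    (hH.contDiffAt.isSymmSndFDerivAt (by simp [minSmoothness_of_isRCLikeNormedField]; exact WithTop.coe_le_coe.mpr le_top)).eq u v
  have hΦd : ∀ (v : ℝ × ℂ) (q : ℝ × ℂ), DifferentiableAt ℝ (fun q => fderiv ℝ H q v) q :=
    fun v q => ((smooth_fderiv_apply hH v).differentiable (by simp)) q
  have hL1 : (fun z => deriv (fun σ => H (σ, z)) τ) = fun z => fderiv ℝ H (τ, z) (1, 0) :=
    funext fun z => deriv_slice_left (hda _)
  have hL2 : WDbar (fun z => fderiv ℝ H (τ, z) (1, 0)) ξ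
      = (fderiv ℝ (fun q => fderiv ℝ H q (1, 0)) (τ, ξ) (0, 1)
        + Complex.I * fderiv ℝ (fun q => fderiv ℝ H q (1, 0)) (τ, ξ) (0, Complex.I)) / 2 :=
    WDbar_slice (H := fun q => fderiv ℝ H q (1, 0)) (hΦd _ _)
  rw [hL1, hL2, key_fderiv_apply hH, key_fderiv_apply hH]
  have hR1 : (fun σ => WDbar (fun z => H (σ, z)) ξ) = fun σ =>
      (fderiv ℝ H (σ, ξ) (0, 1) + Complex.I * fderiv ℝ H (σ, ξ) (0, Complex.I)) / 2 :=
    funext fun σ => WDbar_slice (hda _)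
  rw [hR1]
  have h1 : HasDerivAt (fun σ => fderiv ℝ H (σ, ξ) (0, 1)) (K (1, 0) (0, 1)) τ := by
    have h := hasDerivAt_slice_left (H := fun q => fderiv ℝ H q (0, 1)) (τ := τ) (ξ := ξ) (hΦd _ _)
    rwa [key_fderiv_apply hH] at h
  have hI : HasDerivAt (fun σ => fderiv ℝ H (σ, ξ) (0, Complex.I)) (K (1, 0) (0, Complex.I)) τ := by
    have h := hasDerivAt_slice_left (H := fun q => fderiv ℝ H q (0, Complex.I)) (τ := τ) (ξ := ξ) (hΦd _ _)
    rwa [key_fderiv_apply hH] at h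
  rw [((h1.fun_add (hI.const_mul Complex.I)).div_const 2).deriv]
  rw [hsym (0, 1) (1, 0), hsym (0, Complex.I) (1, 0)]


end Waux

namespace Waux
open Complex

lemma smooth_conj : ContDiff ℝ (⊤ : ℕ∞) (fun z : ℂ => (starRingEnd ℂ) z) := Complex.conjCLE.contDiff

lemma smooth_mono (c : ℂ) (j k : ℕ) :
    ContDiff ℝ (⊤ : ℕ∞) (fun z : ℂ => c * z ^ j * (starRingEnd ℂ z) ^ k) :=
  ((contDiff_const.mul (contDiff_id.pow j)).mul (smooth_conj.pow k))

lemma WD_monomial (c : ℂ) (j k : ℕ) (z : ℂ) :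
    WD (fun z => c * z ^ j * (starRingEnd ℂ z) ^ k) z
      = c * ((j : ℂ) * z ^ (j - 1)) * (starRingEnd ℂ z) ^ k := by
  have h1 : DifferentiableAt ℝ (fun z : ℂ => c * z ^ j) z :=
    (differentiableAt_fun_id.fun_pow j).const_mul c
  have h2 : DifferentiableAt ℝ (fun z : ℂ => (starRingEnd ℂ z) ^ k) z :=
    (diff_conj).pow k
  rw [WD_mul h1 h2, WD_pow diff_conj k, WD_conj, WD_const_mul c (differentiableAt_fun_id.fun_pow j),
    WD_pow differentiableAt_fun_id j, WD_id]
  ring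

lemma WDbar_monomial (c : ℂ) (j k : ℕ) (z : ℂ) :
    WDbar (fun z => c * z ^ j * (starRingEnd ℂ z) ^ k) z
      = c * z ^ j * ((k : ℂ) * (starRingEnd ℂ z) ^ (k - 1)) := by
  have h1 : DifferentiableAt ℝ (fun z : ℂ => c * z ^ j) z :=
    (differentiableAt_fun_id.fun_pow j).const_mul c
  have h2 : DifferentiableAt ℝ (fun z : ℂ => (starRingEnd ℂ z) ^ k) z :=
    (diff_conj).pow k
  rw [WDbar_mul h1 h2, WDbar_pow diff_conj k, WDbar_conj,
    WDbar_const_mul c (differentiableAt_fun_id.fun_pow j), WDbar_pow differentiableAt_fun_id j, WDbar_id]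
  ring

def ZDegLe (n : ℕ) (f : ℂ → ℂ) : Prop :=
  ∃ (K : ℕ) (c : ℕ → ℕ → ℂ), ∀ z, f z
    = ∑ j ∈ Finset.range (n + 1), ∑ k ∈ Finset.range (K + 1), c j k * z ^ j * (starRingEnd ℂ z) ^ k

lemma ZDegLe.smooth {n : ℕ} {f : ℂ → ℂ} (h : ZDegLe n f) : ContDiff ℝ (⊤ : ℕ∞) f := by
  obtain ⟨K, c, hc⟩ := h
  rw [funext hc]
  exact ContDiff.sum fun j _ => ContDiff.sum fun k _ => smooth_mono (c j k) j k

lemma diff_inner_sum {K : ℕ} (cc : ℕ → ℂ) (j : ℕ) (z : ℂ) :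
    DifferentiableAt ℝ (fun z : ℂ => ∑ k ∈ Finset.range (K + 1), cc k * z ^ j * (starRingEnd ℂ z) ^ k) z :=
  DifferentiableAt.fun_sum fun k _ => ((smooth_mono (cc k) j k).differentiable (by simp)) z

lemma ZDegLe.wd {n : ℕ} {f : ℂ → ℂ} (h : ZDegLe (n + 1) f) : ZDegLe n (WD f) := by
  obtain ⟨K, c, hc⟩ := h
  refine ⟨K, fun j k => ((j : ℂ) + 1) * c (j + 1) k, fun z => ?_⟩
  rw [funext hc]
  rw [WD_sum _ _ (fun j _ => diff_inner_sum (fun k => c j k) j z)]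
  have hin : ∀ j, WD (fun z => ∑ k ∈ Finset.range (K + 1), c j k * z ^ j * (starRingEnd ℂ z) ^ k) z
      = ∑ k ∈ Finset.range (K + 1), c j k * ((j : ℂ) * z ^ (j - 1)) * (starRingEnd ℂ z) ^ k := by
    intro j
    rw [WD_sum _ _ (fun k _ => ((smooth_mono (c j k) j k).differentiable (by simp)) z)]
    exact Finset.sum_congr rfl fun k _ => WD_monomial (c j k) j k z
  simp only [hin]
  rw [Finset.sum_range_succ']
  simp only [Nat.cast_zero, zero_mul, mul_zero, zero_mul, Finset.sum_const_zero, add_zero]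
  refine Finset.sum_congr rfl fun j _ => Finset.sum_congr rfl fun k _ => ?_
  push_cast
  ring

lemma ZDegLe.wdbar {n : ℕ} {f : ℂ → ℂ} (h : ZDegLe n f) : ZDegLe n (WDbar f) := by
  obtain ⟨K, c, hc⟩ := h
  refine ⟨K, fun j k => if k < K then ((k : ℂ) + 1) * c j (k + 1) else 0, fun z => ?_⟩
  rw [funext hc]
  rw [WDbar_sum _ _ (fun j _ => diff_inner_sum (fun k => c j k) j z)]
  have hin : ∀ j, WDbar (fun z => ∑ k ∈ Finset.range (K + 1), c j k * z ^ j * (starRingEnd ℂ z) ^ k) z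
      = ∑ k ∈ Finset.range (K + 1), c j k * z ^ j * ((k : ℂ) * (starRingEnd ℂ z) ^ (k - 1)) := by
    intro j
    rw [WDbar_sum _ _ (fun k _ => ((smooth_mono (c j k) j k).differentiable (by simp)) z)]
    exact Finset.sum_congr rfl fun k _ => WDbar_monomial (c j k) j k z
  simp only [hin]
  refine Finset.sum_congr rfl fun j _ => ?_
  rw [Finset.sum_range_succ']
  simp only [Nat.cast_zero, zero_mul, mul_zero, add_zero]
  rw [Finset.sum_range_succ]
  rw [if_neg (lt_irrefl K)]
  simp only [zero_mul, add_zero]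
  refine Finset.sum_congr rfl fun k hk => ?_
  rw [if_pos (Finset.mem_range.mp hk)]
  push_cast
  ring

lemma zdeg_vanish {n : ℕ} : ∀ (f : ℂ → ℂ), ZDegLe n f → ∀ z, WD (WD^[n] f) z = 0 := by
  induction n with
  | zero =>
    intro f h z
    obtain ⟨K, c, hc⟩ := h
    simp only [Function.iterate_zero, id_eq]
    rw [funext hc]
    have h1 : WD (fun z => ∑ j ∈ Finset.range 1, ∑ k ∈ Finset.range (K + 1),
        c j k * z ^ j * (starRingEnd ℂ z) ^ k) z
        = ∑ j ∈ Finset.range 1, WD (fun z => ∑ k ∈ Finset.range (K + 1),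
            c j k * z ^ j * (starRingEnd ℂ z) ^ k) z :=
      WD_sum _ _ (fun j _ => diff_inner_sum (fun k => c j k) j z)
    rw [h1, Finset.sum_range_one,
      WD_sum _ _ (fun k _ => ((smooth_mono (c 0 k) 0 k).differentiable (by simp)) z)]
    refine Finset.sum_eq_zero fun k _ => ?_
    rw [WD_monomial]
    simp
  | succ m ih =>
    intro f h z
    rw [Function.iterate_succ_apply]
    exact ih (WD f) h.wd z

lemma contDiff_WD_iter {q : ℂ → ℂ} (hq : ContDiff ℝ (⊤ : ℕ∞) q) : ∀ j, ContDiff ℝ (⊤ : ℕ∞) (WD^[j] q) := by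
  intro j
  induction j with
  | zero => simpa using hq
  | succ m ih =>
    rw [Function.iterate_succ_apply']
    exact contDiff_WD ih

lemma wdbar_iter_comm : ∀ (j : ℕ) (q : ℂ → ℂ), ContDiff ℝ (⊤ : ℕ∞) q →
    ∀ z, WDbar (WD^[j] q) z = WD^[j] (WDbar q) z := by
  intro j
  induction j with
  | zero => intro q _ z; simp
  | succ m ih =>
    intro q hq z
    rw [Function.iterate_succ_apply, Function.iterate_succ_apply]
    rw [ih (WD q) (contDiff_WD hq) z]
    have : WDbar (WD q) = WD (WDbar q) := funext fun y => (wd_wdbar_comm hq y).symm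
    rw [this]

lemma tel_WD (D : ℕ) (q : ℂ → ℂ) (hq : ContDiff ℝ (⊤ : ℕ∞) q)
    (hdeg : ∀ z, WD (WD^[D] q) z = 0) (w z : ℂ) :
    WD (fun z => ∑ j ∈ Finset.Icc 1 D, (1 / (j.factorial : ℂ)) * WD^[j] q z * (w - z) ^ j) z
      = -(WD q z) := by
  have hiter := contDiff_WD_iter hq
  have hsubd : ∀ (j : ℕ) (y : ℂ), DifferentiableAt ℝ (fun z : ℂ => (w - z) ^ j) y :=
    fun j y => ((differentiableAt_const w).sub differentiableAt_fun_id).pow j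
  have hWDsub : ∀ y : ℂ, WD (fun z : ℂ => w - z) y = -1 := by
    intro y
    rw [WD_sub (differentiableAt_const w) differentiableAt_fun_id, WD_const, WD_id]
    ring
  have hterm : ∀ j ∈ Finset.Icc 1 D,
      WD (fun z => (1 / (j.factorial : ℂ)) * WD^[j] q z * (w - z) ^ j) z
      = (1 / (j.factorial : ℂ)) * WD (WD^[j] q) z * (w - z) ^ j
        - (1 / (j.factorial : ℂ)) * WD^[j] q z * ((j : ℂ) * (w - z) ^ (j - 1)) := by
    intro j _
    have h1 : DifferentiableAt ℝ (fun z => (1 / (j.factorial : ℂ)) * WD^[j] q z) z :=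
      (((hiter j).differentiable (by simp)) z).const_mul _
    rw [WD_mul h1 (hsubd j z), WD_const_mul _ (((hiter j).differentiable (by simp)) z),
      WD_pow ((differentiableAt_const w).fun_sub differentiableAt_fun_id) j, hWDsub]
    ring
  rw [WD_sum _ _ (fun j _ => (((((hiter j).differentiable (by simp)) z).const_mul
    ((1 : ℂ) / (j.factorial : ℂ))).fun_mul (hsubd j z)))]
  rw [Finset.sum_congr rfl hterm]
  set g : ℕ → ℂ := fun i => (1 / (i.factorial : ℂ)) * WD (WD^[i] q) z * (w - z) ^ i with hg
  have hstep : ∀ i ∈ Finset.range D,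
      (1 / ((1 + i).factorial : ℂ)) * WD (WD^[1 + i] q) z * (w - z) ^ (1 + i)
        - (1 / ((1 + i).factorial : ℂ)) * WD^[1 + i] q z * (((1 + i : ℕ) : ℂ) * (w - z) ^ i)
      = g (i + 1) - g i := by
    intro i _
    have h1 : (1 : ℕ) + i = i + 1 := by omega
    rw [h1]
    have hfac : (((i + 1).factorial : ℂ)) = ((i : ℂ) + 1) * (i.factorial : ℂ) := by
      rw [Nat.factorial_succ]; push_cast; ring
    have hne : ((i.factorial : ℂ)) ≠ 0 := Nat.cast_ne_zero.mpr (Nat.factorial_ne_zero i)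
    have hne2 : ((i : ℂ) + 1) ≠ 0 := by
      intro hcon
      have : ((i : ℂ) + 1) = ((i + 1 : ℕ) : ℂ) := by push_cast; ring
      rw [this] at hcon
      exact (Nat.cast_ne_zero.mpr (Nat.succ_ne_zero i)) hcon
    have hit : WD^[i + 1] q z = WD (WD^[i] q) z := by
      rw [Function.iterate_succ_apply']
    rw [hit]
    simp only [hg, Nat.add_sub_cancel]
    rw [hfac]
    push_cast
    field_simp
  rw [← Finset.Ico_add_one_right_eq_Icc, Finset.sum_Ico_eq_sum_range]
  simp only [Nat.succ_sub_one, Nat.add_sub_cancel, Nat.add_sub_cancel_left]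
  rw [Finset.sum_congr rfl hstep, Finset.sum_range_sub g]
  have hgD : g D = 0 := by simp [hg, hdeg z]
  have hg0 : g 0 = WD q z := by simp [hg]
  rw [hgD, hg0]
  ring

lemma tel_WDbar (D : ℕ) (q : ℂ → ℂ) (hq : ContDiff ℝ (⊤ : ℕ∞) q) (w z : ℂ) :
    WDbar (fun z => ∑ j ∈ Finset.Icc 1 D, (1 / (j.factorial : ℂ)) * WD^[j] q z * (w - z) ^ j) z
      = ∑ j ∈ Finset.Icc 1 D, (1 / (j.factorial : ℂ)) * WDbar (WD^[j] q) z * (w - z) ^ j := by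
  have hiter := contDiff_WD_iter hq
  have hsubd : ∀ (j : ℕ) (y : ℂ), DifferentiableAt ℝ (fun z : ℂ => (w - z) ^ j) y :=
    fun j y => ((differentiableAt_const w).sub differentiableAt_fun_id).pow j
  have hWDbarsub : ∀ y : ℂ, WDbar (fun z : ℂ => w - z) y = 0 := by
    intro y
    rw [WDbar_sub (differentiableAt_const w) differentiableAt_fun_id, WDbar_const, WDbar_id]
    ring
  rw [WDbar_sum _ _ (fun j _ => (((((hiter j).differentiable (by simp)) z).const_mul
    ((1 : ℂ) / (j.factorial : ℂ))).fun_mul (hsubd j z)))]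
  refine Finset.sum_congr rfl fun j _ => ?_
  have h1 : DifferentiableAt ℝ (fun z => (1 / (j.factorial : ℂ)) * WD^[j] q z) z :=
    (((hiter j).differentiable (by simp)) z).const_mul _
  rw [WDbar_mul h1 (hsubd j z), WDbar_const_mul _ (((hiter j).differentiable (by simp)) z),
    WDbar_pow ((differentiableAt_const w).fun_sub differentiableAt_fun_id) j, hWDbarsub]
  ring

end Waux

/-- The commutator `[□_{τp,ξ}, M_{τp}] = -∂²p/∂ξ∂ξ̄ - e(w,ξ) Z_{τp,ξ} + conj(e(w,ξ)) Z̄_{τp,ξ}`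
as operators on smooth functions of `(τ, ξ)` with parameter `w`. -/
theorem box_M_commutator (p : ℂ → ℂ) (D : ℕ)
    (hpoly : IsCCPoly p D) (hreal : IsRealValued p) (w : ℂ)
    (F : ℝ → ℂ → ℂ) (hF : ContDiff ℝ (⊤ : ℕ∞) (fun q : ℝ × ℂ => F q.1 q.2))
    (τ : ℝ) (ξ : ℂ) :
    BoxOp p τ (Mop p D w F τ) ξ -
        Mop p D w (fun σ ζ => BoxOp p σ (F σ) ζ) τ ξ =
      -(WD (WDbar p) ξ) * F τ ξ - efun p D w ξ * Zop p τ (F τ) ξ +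
        starRingEnd ℂ (efun p D w ξ) * Zbarop p τ (F τ) ξ := by
  classical
  obtain ⟨a0, ha0⟩ := hpoly
  -- p-side basic facts
  have hzp : Waux.ZDegLe D p := ⟨D, a0, ha0⟩
  have hps : ContDiff ℝ (⊤ : ℕ∞) p := hzp.smooth
  have hdegp : ∀ z, WD (WD^[D] p) z = 0 := Waux.zdeg_vanish p hzp
  have hzb : Waux.ZDegLe D (WDbar p) := hzp.wdbar
  have hbs : ContDiff ℝ (⊤ : ℕ∞) (WDbar p) := Waux.contDiff_WDbar hps
  have has : ContDiff ℝ (⊤ : ℕ∞) (WD p) := Waux.contDiff_WD hps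
  have hdegb : ∀ z, WD (WD^[D] (WDbar p)) z = 0 := Waux.zdeg_vanish _ hzb
  have dA : ∀ z, DifferentiableAt ℝ (WD p) z := fun z => (has.differentiable (by simp)) z
  have dB : ∀ z, DifferentiableAt ℝ (WDbar p) z := fun z => (hbs.differentiable (by simp)) z
  have hconjp : (fun z => (starRingEnd ℂ) (p z)) = p :=
    funext fun z => Complex.conj_eq_iff_im.mpr (hreal z)
  have hBA : ∀ z, WDbar p z = (starRingEnd ℂ) (WD p z) := by
    intro z
    conv_lhs => rw [← hconjp]
    exact Waux.WDbar_conj_comp ((hps.differentiable (by simp)) z)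
  -- S and E functions
  set Sf : ℂ → ℂ :=
    fun z => ∑ j ∈ Finset.Icc 1 D, (1 / (j.factorial : ℂ)) * WD^[j] p z * (w - z) ^ j with hSfdef
  set Ef : ℂ → ℂ :=
    fun z => ∑ j ∈ Finset.Icc 1 D, (1 / (j.factorial : ℂ)) * WD^[j] (WDbar p) z * (w - z) ^ j
    with hEfdef
  have hE : ∀ z, efun p D w z = Ef z := by
    intro z
    refine Finset.sum_congr rfl fun j _ => ?_
    simp [Acoef]
  have hSsm : ContDiff ℝ (⊤ : ℕ∞) Sf :=
    ContDiff.sum fun j _ => (contDiff_const.mul (Waux.contDiff_WD_iter hps j)).mul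
      ((contDiff_const.sub contDiff_id).pow j)
  have hEsm : ContDiff ℝ (⊤ : ℕ∞) Ef :=
    ContDiff.sum fun j _ => (contDiff_const.mul (Waux.contDiff_WD_iter hbs j)).mul
      ((contDiff_const.sub contDiff_id).pow j)
  have dS : ∀ z, DifferentiableAt ℝ Sf z := fun z => (hSsm.differentiable (by simp)) z
  have dE : ∀ z, DifferentiableAt ℝ Ef z := fun z => (hEsm.differentiable (by simp)) z
  have dconjS : ∀ z, DifferentiableAt ℝ (fun z : ℂ => (starRingEnd ℂ) (Sf z)) z :=
    fun z => (Waux.diff_conj).comp z (dS z)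
  set Tcf : ℂ → ℂ := fun z => Complex.I * (Sf z - (starRingEnd ℂ) (Sf z)) with hTcdef
  have hT : ∀ z, ((Ttwist p D w z : ℝ) : ℂ) = Tcf z := by
    intro z
    have h1 : (∑ j ∈ Finset.Icc 1 D, Acoef p j 0 z * (w - z) ^ j) = Sf z := by
      refine Finset.sum_congr rfl fun j _ => ?_
      simp [Acoef]
    rw [Ttwist, h1]
    simp only [hTcdef]
    rw [Complex.sub_conj]
    push_cast
    ring_nf
    rw [Complex.I_sq]
    ring
  have hTcsm : ContDiff ℝ (⊤ : ℕ∞) Tcf :=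
    contDiff_const.mul (hSsm.sub (Waux.smooth_conj.comp hSsm))
  have dTc : ∀ z, DifferentiableAt ℝ Tcf z := fun z => (hTcsm.differentiable (by simp)) z
  have hWDTcsm : ContDiff ℝ (⊤ : ℕ∞) (WD Tcf) := Waux.contDiff_WD hTcsm
  have dWDTc : ∀ z, DifferentiableAt ℝ (WD Tcf) z := fun z => (hWDTcsm.differentiable (by simp)) z
  -- pointwise derivatives of S, E, Tc
  have hSd : ∀ z, WD Sf z = -(WD p z) := fun z => Waux.tel_WD D p hps hdegp w z
  have hSdb : ∀ z, WDbar Sf z = Ef z := by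
    intro z
    rw [hSfdef]
    rw [Waux.tel_WDbar D p hps w z]
    exact Finset.sum_congr rfl fun j _ => by rw [Waux.wdbar_iter_comm j p hps z]
  have hEd : ∀ z, WD Ef z = -(WD (WDbar p) z) := fun z => Waux.tel_WD D (WDbar p) hbs hdegb w z
  have hTz : ∀ z, WD Tcf z = Complex.I * (-(WD p z) - (starRingEnd ℂ) (Ef z)) := by
    intro z
    rw [hTcdef]
    rw [Waux.WD_const_mul Complex.I ((dS z).fun_sub (dconjS z))]
    rw [Waux.WD_sub (dS z) (dconjS z)]
    rw [hSd z]
    rw [Waux.WD_conj_comp (dS z), hSdb z]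
  have hTzb : ∀ z, WDbar Tcf z = Complex.I * (Ef z + (starRingEnd ℂ) (WD p z)) := by
    intro z
    rw [hTcdef]
    rw [Waux.WDbar_const_mul Complex.I ((dS z).fun_sub (dconjS z))]
    rw [Waux.WDbar_sub (dS z) (dconjS z)]
    rw [hSdb z, Waux.WDbar_conj_comp (dS z), hSd z]
    simp only [map_neg]
    ring
  have hTzzb : WDbar (WD Tcf) ξ = 0 := by
    have h1 : WD Tcf = fun z => Complex.I *
        (-(WD p z) - (starRingEnd ℂ) (Ef z)) := funext hTz
    rw [h1]
    have dnegA : ∀ z, DifferentiableAt ℝ (fun z => -(WD p z)) z := fun z => (dA z).neg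
    have dcE : ∀ z, DifferentiableAt ℝ (fun z => (starRingEnd ℂ) (Ef z)) z :=
      fun z => (Waux.diff_conj).comp z (dE z)
    rw [Waux.WDbar_const_mul Complex.I ((dnegA ξ).fun_sub (dcE ξ))]
    rw [Waux.WDbar_sub (dnegA ξ) (dcE ξ)]
    rw [Waux.WDbar_neg (dA ξ)]
    rw [Waux.WDbar_conj_comp (dE ξ), hEd ξ]
    have h2 : WD (WDbar p) ξ = (starRingEnd ℂ) (WDbar (WD p) ξ) := by
      have h3 : WDbar p = fun z => (starRingEnd ℂ) (WD p z) := funext hBA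
      rw [h3, Waux.WD_conj_comp (dA ξ)]
    rw [h2]
    simp
  -- F-side facts
  have dFσ : ∀ (σ : ℝ) (z : ℂ), DifferentiableAt ℝ (F σ) z :=
    fun σ z => Waux.diff_slice_right ((hF.differentiable (by simp)) (σ, z))
  have hFσsm : ∀ σ : ℝ, ContDiff ℝ (⊤ : ℕ∞) (F σ) := fun σ => Waux.smooth_slice_right hF σ
  have hWDFsm : ∀ σ : ℝ, ContDiff ℝ (⊤ : ℕ∞) (WD (F σ)) := fun σ => Waux.contDiff_WD (hFσsm σ)
  have dWDF : ∀ (σ : ℝ) (z : ℂ), DifferentiableAt ℝ (WD (F σ)) z :=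
    fun σ z => ((hWDFsm σ).differentiable (by simp)) z
  have hH1 : ContDiff ℝ (⊤ : ℕ∞) (fun q : ℝ × ℂ => WD (F q.1) q.2) := Waux.smooth_sliceWD hF
  have hH2 : ContDiff ℝ (⊤ : ℕ∞) (fun q : ℝ × ℂ => WDbar (F q.1) q.2) := Waux.smooth_sliceWDbar hF
  have hH3 : ContDiff ℝ (⊤ : ℕ∞) (fun q : ℝ × ℂ => WDbar (WD (F q.1)) q.2) := Waux.smooth_sliceWDbar hH1
  have dU' : ∀ z, DifferentiableAt ℝ (fun z' : ℂ => deriv (fun σ => F σ z') τ) z :=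
    fun z => Waux.diff_slice_right (((Waux.smooth_slice_deriv hF).differentiable (by simp)) (τ, z))
  have dX : ∀ z, DifferentiableAt ℝ (fun z' : ℂ => deriv (fun σ => WD (F σ) z') τ) z :=
    fun z => Waux.diff_slice_right (((Waux.smooth_slice_deriv hH1).differentiable (by simp)) (τ, z))
  have hswap1 : ∀ z, WD (fun z' => deriv (fun σ => F σ z') τ) z
      = deriv (fun σ => WD (F σ) z) τ := fun z => Waux.swap_WD hF τ z
  have hswap2 : ∀ z, WDbar (fun z' => deriv (fun σ => F σ z') τ) z
      = deriv (fun σ => WDbar (F σ) z) τ := fun z => Waux.swap_WDbar hF τ z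
  have hswap3 : WDbar (fun z => deriv (fun σ => WD (F σ) z) τ) ξ
      = deriv (fun σ => WDbar (WD (F σ)) ξ) τ := Waux.swap_WDbar hH1 τ ξ
  -- the function M_τp F
  have hMFfun : Mop p D w F τ = fun z =>
      deriv (fun σ => F σ z) τ - Complex.I * Tcf z * F τ z := by
    funext z
    simp only [Mop]
    rw [hT z]
  have dMF : ∀ z, DifferentiableAt ℝ (fun z => deriv (fun σ => F σ z) τ
      - Complex.I * Tcf z * F τ z) z :=
    fun z => (dU' z).sub (((dTc z).const_mul Complex.I).mul (dFσ τ z))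
  -- Z applied to M F
  have hZgfun : Zop p τ (Mop p D w F τ) = fun z =>
      deriv (fun σ => WD (F σ) z) τ
        - Complex.I * (WD Tcf z * F τ z + Tcf z * WD (F τ) z)
        - (τ : ℂ) * WD p z * (deriv (fun σ => F σ z) τ - Complex.I * Tcf z * F τ z) := by
    funext z
    have h0 : Zop p τ (Mop p D w F τ) z
        = WD (Mop p D w F τ) z - (τ : ℂ) * WD p z * Mop p D w F τ z := rfl
    rw [h0, hMFfun]
    have h1 : WD (fun z => deriv (fun σ => F σ z) τ - Complex.I * Tcf z * F τ z) z
        = deriv (fun σ => WD (F σ) z) τ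
          - Complex.I * (WD Tcf z * F τ z + Tcf z * WD (F τ) z) := by
      rw [Waux.WD_sub (dU' z) (((dTc z).const_mul Complex.I).fun_mul (dFσ τ z))]
      rw [hswap1 z]
      rw [Waux.WD_mul ((dTc z).const_mul Complex.I) (dFσ τ z),
        Waux.WD_const_mul Complex.I (dTc z)]
      ring
    rw [h1]
  -- WDbar of Z (M F) at ξ
  have hWZ : WDbar (Zop p τ (Mop p D w F τ)) ξ
      = deriv (fun σ => WDbar (WD (F σ)) ξ) τ
        - Complex.I * ((WDbar (WD Tcf) ξ * F τ ξ + WD Tcf ξ * WDbar (F τ) ξ)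
          + (WDbar Tcf ξ * WD (F τ) ξ + Tcf ξ * WDbar (WD (F τ)) ξ))
        - (τ : ℂ) * (WDbar (WD p) ξ * (deriv (fun σ => F σ ξ) τ - Complex.I * Tcf ξ * F τ ξ)
          + WD p ξ * (deriv (fun σ => WDbar (F σ) ξ) τ
            - Complex.I * (WDbar Tcf ξ * F τ ξ + Tcf ξ * WDbar (F τ) ξ))) := by
    rw [hZgfun]
    have dY : DifferentiableAt ℝ (fun z =>
        Complex.I * (WD Tcf z * F τ z + Tcf z * WD (F τ) z)) ξ :=
      (((dWDTc ξ).mul (dFσ τ ξ)).add ((dTc ξ).mul (dWDF τ ξ))).const_mul Complex.I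
    have dZ : DifferentiableAt ℝ (fun z => (τ : ℂ) * WD p z
        * (deriv (fun σ => F σ z) τ - Complex.I * Tcf z * F τ z)) ξ :=
      ((dA ξ).const_mul (τ : ℂ)).mul (dMF ξ)
    rw [Waux.WDbar_sub ((dX ξ).fun_sub dY) dZ, Waux.WDbar_sub (dX ξ) dY]
    rw [hswap3]
    have hY : WDbar (fun z => Complex.I * (WD Tcf z * F τ z + Tcf z * WD (F τ) z)) ξ
        = Complex.I * ((WDbar (WD Tcf) ξ * F τ ξ + WD Tcf ξ * WDbar (F τ) ξ)
          + (WDbar Tcf ξ * WD (F τ) ξ + Tcf ξ * WDbar (WD (F τ)) ξ)) := by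
      rw [Waux.WDbar_const_mul Complex.I
        (((dWDTc ξ).fun_mul (dFσ τ ξ)).fun_add ((dTc ξ).fun_mul (dWDF τ ξ)))]
      rw [Waux.WDbar_add ((dWDTc ξ).fun_mul (dFσ τ ξ)) ((dTc ξ).fun_mul (dWDF τ ξ))]
      rw [Waux.WDbar_mul (dWDTc ξ) (dFσ τ ξ), Waux.WDbar_mul (dTc ξ) (dWDF τ ξ)]
    rw [hY]
    have hZ : WDbar (fun z => (τ : ℂ) * WD p z
        * (deriv (fun σ => F σ z) τ - Complex.I * Tcf z * F τ z)) ξ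
        = (τ : ℂ) * (WDbar (WD p) ξ * (deriv (fun σ => F σ ξ) τ - Complex.I * Tcf ξ * F τ ξ)
          + WD p ξ * (deriv (fun σ => WDbar (F σ) ξ) τ
            - Complex.I * (WDbar Tcf ξ * F τ ξ + Tcf ξ * WDbar (F τ) ξ))) := by
      rw [Waux.WDbar_mul ((dA ξ).const_mul (τ : ℂ)) (dMF ξ)]
      rw [Waux.WDbar_const_mul (τ : ℂ) (dA ξ)]
      have hg : WDbar (fun z => deriv (fun σ => F σ z) τ - Complex.I * Tcf z * F τ z) ξ
          = deriv (fun σ => WDbar (F σ) ξ) τ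
            - Complex.I * (WDbar Tcf ξ * F τ ξ + Tcf ξ * WDbar (F τ) ξ) := by
        rw [Waux.WDbar_sub (dU' ξ) (((dTc ξ).const_mul Complex.I).fun_mul (dFσ τ ξ))]
        rw [hswap2 ξ]
        rw [Waux.WDbar_mul ((dTc ξ).const_mul Complex.I) (dFσ τ ξ),
          Waux.WDbar_const_mul Complex.I (dTc ξ)]
        ring
      rw [hg]
      ring
    rw [hZ]
  -- Box applied to σ-slices
  have hBoxσ : ∀ σ : ℝ, BoxOp p σ (F σ) ξ
      = -(WDbar (WD (F σ)) ξ
          - (σ : ℂ) * (WDbar (WD p) ξ * F σ ξ + WD p ξ * WDbar (F σ) ξ)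
          + (σ : ℂ) * WDbar p ξ * (WD (F σ) ξ - (σ : ℂ) * WD p ξ * F σ ξ)) := by
    intro σ
    have h0 : BoxOp p σ (F σ) ξ
        = -(WDbar (Zop p σ (F σ)) ξ + (σ : ℂ) * WDbar p ξ * Zop p σ (F σ) ξ) := rfl
    have h1 : Zop p σ (F σ) = fun z => WD (F σ) z - (σ : ℂ) * WD p z * F σ z := rfl
    have h2 : WDbar (Zop p σ (F σ)) ξ = WDbar (WD (F σ)) ξ
        - (σ : ℂ) * (WDbar (WD p) ξ * F σ ξ + WD p ξ * WDbar (F σ) ξ) := by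
      rw [h1]
      rw [Waux.WDbar_sub (dWDF σ ξ) (((dA ξ).const_mul (σ : ℂ)).fun_mul (dFσ σ ξ))]
      rw [Waux.WDbar_mul ((dA ξ).const_mul (σ : ℂ)) (dFσ σ ξ)]
      rw [Waux.WDbar_const_mul (σ : ℂ) (dA ξ)]
      ring
    rw [h0, h2]
    have h3 : Zop p σ (F σ) ξ = WD (F σ) ξ - (σ : ℂ) * WD p ξ * F σ ξ := rfl
    rw [h3]
  -- derivative in σ of Box F
  have hdU : HasDerivAt (fun σ => F σ ξ) (deriv (fun σ => F σ ξ) τ) τ :=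
    (Waux.diff_slice_left ((hF.differentiable (by simp)) (τ, ξ))).hasDerivAt
  have hdUZ : HasDerivAt (fun σ => WD (F σ) ξ) (deriv (fun σ => WD (F σ) ξ) τ) τ :=
    (Waux.diff_slice_left ((hH1.differentiable (by simp)) (τ, ξ))).hasDerivAt
  have hdUZB : HasDerivAt (fun σ => WDbar (F σ) ξ) (deriv (fun σ => WDbar (F σ) ξ) τ) τ :=
    (Waux.diff_slice_left ((hH2.differentiable (by simp)) (τ, ξ))).hasDerivAt
  have hdM2 : HasDerivAt (fun σ => WDbar (WD (F σ)) ξ)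
      (deriv (fun σ => WDbar (WD (F σ)) ξ) τ) τ :=
    (Waux.diff_slice_left ((hH3.differentiable (by simp)) (τ, ξ))).hasDerivAt
  have hσ : HasDerivAt (fun σ : ℝ => (σ : ℂ)) 1 τ := by
    simpa using (hasDerivAt_id τ).ofReal_comp
  have hderivBox : deriv (fun σ => BoxOp p σ (F σ) ξ) τ
      = -(deriv (fun σ => WDbar (WD (F σ)) ξ) τ
          - (1 * (WDbar (WD p) ξ * F τ ξ + WD p ξ * WDbar (F τ) ξ)
            + (τ : ℂ) * (WDbar (WD p) ξ * deriv (fun σ => F σ ξ) τ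
              + WD p ξ * deriv (fun σ => WDbar (F σ) ξ) τ))
          + ((1 * WDbar p ξ) * (WD (F τ) ξ - (τ : ℂ) * WD p ξ * F τ ξ)
            + ((τ : ℂ) * WDbar p ξ) * (deriv (fun σ => WD (F σ) ξ) τ
              - (1 * WD p ξ * F τ ξ + (τ : ℂ) * WD p ξ * deriv (fun σ => F σ ξ) τ)))) := by
    have hfun : (fun σ => BoxOp p σ (F σ) ξ) = fun σ =>
        -(WDbar (WD (F σ)) ξ
          - (σ : ℂ) * (WDbar (WD p) ξ * F σ ξ + WD p ξ * WDbar (F σ) ξ)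
          + (σ : ℂ) * WDbar p ξ * (WD (F σ) ξ - (σ : ℂ) * WD p ξ * F σ ξ)) := funext hBoxσ
    rw [hfun]
    have h1 : HasDerivAt (fun σ : ℝ =>
        (σ : ℂ) * (WDbar (WD p) ξ * F σ ξ + WD p ξ * WDbar (F σ) ξ))
        (1 * (WDbar (WD p) ξ * F τ ξ + WD p ξ * WDbar (F τ) ξ)
          + (τ : ℂ) * (WDbar (WD p) ξ * deriv (fun σ => F σ ξ) τ
            + WD p ξ * deriv (fun σ => WDbar (F σ) ξ) τ)) τ :=
      hσ.fun_mul ((hdU.const_mul (WDbar (WD p) ξ)).fun_add (hdUZB.const_mul (WD p ξ)))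
    have h2 : HasDerivAt (fun σ : ℝ =>
        (σ : ℂ) * WDbar p ξ * (WD (F σ) ξ - (σ : ℂ) * WD p ξ * F σ ξ))
        ((1 * WDbar p ξ) * (WD (F τ) ξ - (τ : ℂ) * WD p ξ * F τ ξ)
          + ((τ : ℂ) * WDbar p ξ) * (deriv (fun σ => WD (F σ) ξ) τ
            - (1 * WD p ξ * F τ ξ + (τ : ℂ) * WD p ξ * deriv (fun σ => F σ ξ) τ))) τ := by
      have hinner : HasDerivAt (fun σ : ℝ => (σ : ℂ) * WD p ξ * F σ ξ)
          (1 * WD p ξ * F τ ξ + (τ : ℂ) * WD p ξ * deriv (fun σ => F σ ξ) τ) τ := by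
        have := (hσ.mul_const (WD p ξ)).fun_mul hdU
        convert this using 1
      have := (hσ.mul_const (WDbar p ξ)).fun_mul (hdUZ.fun_sub hinner)
      convert this using 1
    exact (((hdM2.fun_sub h1).fun_add h2).fun_neg).deriv
  -- assemble
  have hMop2 : Mop p D w (fun σ ζ => BoxOp p σ (F σ) ζ) τ ξ
      = deriv (fun σ => BoxOp p σ (F σ) ξ) τ - Complex.I * Tcf ξ * BoxOp p τ (F τ) ξ := by
    simp only [Mop]
    rw [hT ξ]
  have hbox1 : BoxOp p τ (Mop p D w F τ) ξ
      = -(WDbar (Zop p τ (Mop p D w F τ)) ξ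
          + (τ : ℂ) * WDbar p ξ * Zop p τ (Mop p D w F τ) ξ) := rfl
  have hZξ : Zop p τ (Mop p D w F τ) ξ
      = deriv (fun σ => WD (F σ) ξ) τ
        - Complex.I * (WD Tcf ξ * F τ ξ + Tcf ξ * WD (F τ) ξ)
        - (τ : ℂ) * WD p ξ * (deriv (fun σ => F σ ξ) τ - Complex.I * Tcf ξ * F τ ξ) := by
    rw [hZgfun]
  rw [hbox1, hWZ, hZξ, hMop2, hderivBox, hBoxσ τ]
  -- RHS unfolds
  simp only [Zop, Zbarop]
  rw [hTzzb, hTz ξ, hTzb ξ, hE ξ]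
  have hclai : WD (WDbar p) ξ = WDbar (WD p) ξ := Waux.wd_wdbar_comm hps ξ
  rw [hclai, hBA ξ]
  ring_nf
  simp only [Complex.I_sq]
  ring
end
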